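/- arXiv:2406.08104 — 14 statements merged into one kernel-verified Lean document; each statement's English description precedes it below -/
import Mathlib

section
/- Let G be a DAG on jobs J with unit processing times, P a critical path, and let m*_P be the maximum size of a matching in the bipartite graph on P versus J∖P whose edges join pairs of jobs that are incomparable in the precedence order. Then every feasible schedule x with makespan |P| satisfies F(x) ≤ |P| + m*_P, where F(x) = Σ_{τ=0}^{|P|−1} min(2, r_τ(x)) and r_τ(x) is the number of jobs scheduled at time step τ. -/
open Finset

variable {ι : Type*}

/-- Two jobs are independent (incomparable) in the precedence order. -/
def IndepJobs (prec : ι → ι → Prop) (i j : ι) : Prop :=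
  i ≠ j ∧ ¬ prec i j ∧ ¬ prec j i

/-- A matching for a relation `R`: a finite set of `R`-related pairs with
pairwise distinct endpoints. -/
def IsMatching (R : ι → ι → Prop) (pairs : Finset (ι × ι)) : Prop :=
  (∀ e ∈ pairs, R e.1 e.2) ∧
  ∀ e ∈ pairs, ∀ f ∈ pairs, e ≠ f →
    e.1 ≠ f.1 ∧ e.1 ≠ f.2 ∧ e.2 ≠ f.1 ∧ e.2 ≠ f.2

/-- `m` is the maximum size of a matching for relation `R`. -/
def IsMaxMatchingSize (R : ι → ι → Prop) (m : ℕ) : Prop :=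
  (∃ pairs : Finset (ι × ι), IsMatching R pairs ∧ pairs.card = m) ∧
  ∀ pairs : Finset (ι × ι), IsMatching R pairs → pairs.card ≤ m

/-- A critical path: a longest directed path (nodup chain) of the precedence DAG. -/
def IsCriticalPath (prec : ι → ι → Prop) (P : List ι) : Prop :=
  P.Chain' prec ∧ P.Nodup ∧
  ∀ Q : List ι, Q.Chain' prec → Q.Nodup → Q.length ≤ P.length

variable [Fintype ι] [DecidableEq ι]

/-- Number of (unit) jobs scheduled at time step `τ`. -/
def loadAt (x : ι → ℕ) (τ : ℕ) : ℕ := (univ.filter fun i => x i = τ).card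

/-- The resource leveling objective: per time step, resource use capped at level `L`. -/
def Fobj (L M : ℕ) (x : ι → ℕ) : ℕ := ∑ τ ∈ Finset.range M, min L (loadAt x τ)

/-- Every feasible schedule with makespan `|P|` satisfies `F(x) ≤ |P| + m*_P`. -/
theorem stmt1 {ι : Type*} [Fintype ι] [DecidableEq ι] (prec : ι → ι → Prop)
    (htrans : Transitive prec) (hirr : ∀ i, ¬ prec i i)
    (P : List ι) (hcrit : IsCriticalPath prec P)
    (mP : ℕ)
    (hmP : IsMaxMatchingSize (fun i j => i ∈ P ∧ j ∉ P ∧ IndepJobs prec i j) mP)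
    (x : ι → ℕ)
    (hfeas : ∀ i j, prec i j → x i + 1 ≤ x j)
    (hms : ∀ i, x i + 1 ≤ P.length) :
    Fobj 2 P.length x ≤ P.length + mP := by
  classical
  have hchain := hcrit.1
  have hnodup := hcrit.2.1
  have hstep : ∀ k (h : k + 1 < P.length),
      prec (P.get ⟨k, by omega⟩) (P.get ⟨k + 1, h⟩) :=
    fun k h => List.isChain_iff_getElem.mp hchain k (by omega)
  have hmono : ∀ k d (h : k + d < P.length),
      x (P.get ⟨k, by omega⟩) + d ≤ x (P.get ⟨k + d, h⟩) := by
    intro k d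
    induction d with
    | zero => intro h; simp
    | succ n ih =>
      intro h
      have h1 := ih (by omega)
      have h2 := hfeas _ _ (hstep (k + n) h)
      show x (P.get ⟨k, by omega⟩) + (n + 1) ≤ x (P.get ⟨k + n + 1, h⟩)
      omega
  have hmono' : ∀ k l (hk : k ≤ l) (hl : l < P.length),
      x (P.get ⟨k, by omega⟩) + (l - k) ≤ x (P.get ⟨l, hl⟩) := by
    intro k l hk hl
    have h3 : k + (l - k) = l := by omega
    have := hmono k (l - k) (by omega)
    simp only [h3] at this
    exact this
  have hx : ∀ k (h : k < P.length), x (P.get ⟨k, h⟩) = k := by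
    intro k h
    have hlow := hmono' 0 k (by omega) h
    have hhigh := hmono' k (P.length - 1) (by omega) (by omega)
    have hend := hms (P.get ⟨P.length - 1, by omega⟩)
    omega
  set S := (Finset.range P.length).filter (fun τ => 2 ≤ loadAt x τ) with hS
  have hτlt : ∀ τ ∈ S, τ < P.length := fun τ h => mem_range.mp (mem_filter.mp h).1
  -- Step 1 : Fobj ≤ |P| + S.card
  have step1 : Fobj 2 P.length x ≤ P.length + S.card := by
    have : Fobj 2 P.length x ≤
        ∑ τ ∈ Finset.range P.length, (1 + if 2 ≤ loadAt x τ then 1 else 0) := by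
      refine Finset.sum_le_sum fun τ _ => ?_
      split_ifs with h <;> omega
    calc Fobj 2 P.length x
        ≤ ∑ τ ∈ Finset.range P.length, (1 + if 2 ≤ loadAt x τ then 1 else 0) := this
      _ = P.length + S.card := by
          rw [Finset.sum_add_distrib, Finset.sum_const, smul_eq_mul, mul_one,
            Finset.card_range, hS, Finset.card_filter]
  -- Step 2 : build a matching of size S.card
  have hex : ∀ t : {τ // τ ∈ S}, ∃ q, x q = t.1 ∧ q ∉ P ∧
      IndepJobs prec (P.get ⟨t.1, hτlt t.1 t.2⟩) q := by
    rintro ⟨τ, hτ⟩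
    have hlt : τ < P.length := hτlt τ hτ
    set p := P.get ⟨τ, hlt⟩ with hp
    have hxp : x p = τ := hx τ hlt
    have hload : 2 ≤ loadAt x τ := (mem_filter.mp hτ).2
    have hpmem : p ∈ univ.filter fun i => x i = τ := by
      simp [hxp]
    have hne : ((univ.filter fun i => x i = τ).erase p).Nonempty := by
      rw [← Finset.card_pos, Finset.card_erase_of_mem hpmem]
      unfold loadAt at hload; omega
    obtain ⟨q, hq⟩ := hne
    have hqp : q ≠ p := Finset.ne_of_mem_erase hq
    have hxq : x q = τ := by
      have := Finset.mem_of_mem_erase hq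
      simpa using this
    refine ⟨q, hxq, ?_, hqp.symm, ?_, ?_⟩
    · intro hqP
      obtain ⟨k, hk⟩ := List.mem_iff_get.mp hqP
      have : x q = k.1 := by rw [← hk]; exact hx k.1 k.2
      have hkτ : k.1 = τ := by omega
      apply hqp
      rw [hp, ← hk]
      congr 1
      exact Fin.ext hkτ
    · intro hcon
      have := hfeas _ _ hcon
      omega
    · intro hcon
      have := hfeas _ _ hcon
      omega
  let g : {τ // τ ∈ S} → ι × ι :=
    fun t => (P.get ⟨t.1, hτlt t.1 t.2⟩, (hex t).choose)
  have hg1 : ∀ t, x (g t).1 = t.1 := fun t => hx t.1 (hτlt t.1 t.2)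
  have hg2 : ∀ t, x (g t).2 = t.1 := fun t => (hex t).choose_spec.1
  have hginj : Function.Injective g := by
    intro t s h
    have h1 := hg1 t
    rw [h] at h1
    have h2 := hg1 s
    exact Subtype.ext (by omega)
  have hmatch : IsMatching (fun i j => i ∈ P ∧ j ∉ P ∧ IndepJobs prec i j)
      (S.attach.image g) := by
    constructor
    · intro e he
      obtain ⟨t, _, rfl⟩ := Finset.mem_image.mp he
      exact ⟨List.get_mem P ⟨t.1, hτlt t.1 t.2⟩, (hex t).choose_spec.2.1, (hex t).choose_spec.2.2⟩
    · intro e he f hf hne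
      obtain ⟨t, _, rfl⟩ := Finset.mem_image.mp he
      obtain ⟨s, _, rfl⟩ := Finset.mem_image.mp hf
      have hts : t.1 ≠ s.1 := fun h => hne (by rw [Subtype.ext h])
      have h1 := hg1 t; have h2 := hg2 t
      have h3 := hg1 s; have h4 := hg2 s
      refine ⟨?_, ?_, ?_, ?_⟩
      · intro h; rw [h] at h1; omega
      · intro h; rw [h] at h1; omega
      · intro h; rw [h] at h2; omega
      · intro h; rw [h] at h2; omega
  have hcardS : (S.attach.image g).card = S.card := by
    rw [Finset.card_image_of_injective _ hginj, Finset.card_attach]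
  have step2 : S.card ≤ mP := by
    rw [← hcardS]
    exact hmP.2 _ hmatch
  omega
end

section
/- Let G be a DAG on jobs J with unit processing times and let m* be the maximum size of a matching in the independence graph of G (vertices J, edges between incomparable pairs). For any feasible schedule x with makespan at most M, F(x) ≤ M + m*. -/
open Finset

variable {ι : Type*}

variable [Fintype ι] [DecidableEq ι]

/-- Every feasible schedule with makespan at most `M` satisfies `F(x) ≤ M + m*`. -/
theorem stmt2 {ι : Type*} [Fintype ι] [DecidableEq ι] (prec : ι → ι → Prop)
    (htrans : Transitive prec) (hirr : ∀ i, ¬ prec i i)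
    (mstar : ℕ)
    (hmstar : IsMaxMatchingSize (IndepJobs prec) mstar)
    (M : ℕ) (x : ι → ℕ)
    (hfeas : ∀ i j, prec i j → x i + 1 ≤ x j)
    (hms : ∀ i, x i + 1 ≤ M) :
    Fobj 2 M x ≤ M + mstar := by
  classical
  set S : Finset ℕ := (Finset.range M).filter (fun τ => 2 ≤ loadAt x τ) with hS
  -- for each heavy time step, pick two independent jobs starting there
  have key : ∀ τ ∈ S, ∃ p : ι × ι, x p.1 = τ ∧ x p.2 = τ ∧ IndepJobs prec p.1 p.2 := by
    intro τ hτ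
    have h2 : 2 ≤ (univ.filter fun i => x i = τ).card := by
      have := (Finset.mem_filter.mp hτ).2
      simpa [loadAt] using this
    obtain ⟨a, ha, b, hb, hab⟩ := Finset.one_lt_card.mp (show 1 < (univ.filter fun i => x i = τ).card by omega)
    have hxa : x a = τ := (Finset.mem_filter.mp ha).2
    have hxb : x b = τ := (Finset.mem_filter.mp hb).2
    refine ⟨(a, b), hxa, hxb, hab, ?_, ?_⟩
    · intro h; have := hfeas a b h; omega
    · intro h; have := hfeas b a h; omega
  choose f hf1 hf2 hf3 using key
  set pairs : Finset (ι × ι) := S.attach.image (fun t => f t.1 t.2) with hpairs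
  have hcard : pairs.card = S.card := by
    rw [hpairs, Finset.card_image_of_injective _ ?_, Finset.card_attach]
    intro s t hst
    have h1 := hf1 s.1 s.2
    have h2 := hf1 t.1 t.2
    have h3 : x (f s.1 s.2).1 = x (f t.1 t.2).1 := congrArg (fun p => x p.1) hst
    exact Subtype.ext (by rw [← h1, ← h2, h3])
  have hmatch : IsMatching (IndepJobs prec) pairs := by
    constructor
    · intro e he
      obtain ⟨t, _, rfl⟩ := Finset.mem_image.mp he
      exact hf3 t.1 t.2
    · intro e he g hg heg
      obtain ⟨s, _, rfl⟩ := Finset.mem_image.mp he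
      obtain ⟨t, _, rfl⟩ := Finset.mem_image.mp hg
      have hst : (s : ℕ) ≠ (t : ℕ) := by
        intro h
        exact heg (by rw [Subtype.ext h])
      have a1 := hf1 s.1 s.2; have a2 := hf2 s.1 s.2
      have b1 := hf1 t.1 t.2; have b2 := hf2 t.1 t.2
      refine ⟨fun h => hst ?_, fun h => hst ?_, fun h => hst ?_, fun h => hst ?_⟩
      · rw [← a1, ← b1, h]
      · rw [← a1, ← b2, h]
      · rw [← a2, ← b1, h]
      · rw [← a2, ← b2, h]
  have hle : S.card ≤ mstar := hcard ▸ hmstar.2 pairs hmatch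
  have hsum : Fobj 2 M x ≤ ∑ τ ∈ Finset.range M,
      (1 + if 2 ≤ loadAt x τ then 1 else 0) := by
    apply Finset.sum_le_sum
    intro τ _
    by_cases h : 2 ≤ loadAt x τ <;> simp [h] <;> omega
  calc Fobj 2 M x ≤ _ := hsum
    _ = M + S.card := by
        rw [Finset.sum_add_distrib, Finset.sum_const, Finset.card_range, smul_eq_mul,
          mul_one, hS, Finset.card_filter]
    _ ≤ M + mstar := by omega
end

section
/- Let G be a DAG on jobs J with unit processing times, P a critical path, m*_P the maximum matching size in the bipartite independence graph between P and J∖P, and m* the maximum matching size in the full independence graph. For every M ≥ |P|, any feasible schedule x with makespan at most M satisfies F(x) ≤ 2(M − |P|) + |P| + m*_P. -/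
open Finset

variable {ι : Type*}

variable [Fintype ι] [DecidableEq ι]

/-- For `M ≥ |P|`, every feasible schedule with makespan at most `M` satisfies
`F(x) ≤ 2(M − |P|) + |P| + m*_P`. -/
theorem stmt3 {ι : Type*} [Fintype ι] [DecidableEq ι] (prec : ι → ι → Prop)
    (htrans : Transitive prec) (hirr : ∀ i, ¬ prec i i)
    (P : List ι) (hcrit : IsCriticalPath prec P)
    (mP : ℕ)
    (hmP : IsMaxMatchingSize (fun i j => i ∈ P ∧ j ∉ P ∧ IndepJobs prec i j) mP)
    (mstar : ℕ)
    (hmstar : IsMaxMatchingSize (IndepJobs prec) mstar)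
    (M : ℕ) (hMP : P.length ≤ M)
    (x : ι → ℕ)
    (hfeas : ∀ i j, prec i j → x i + 1 ≤ x j)
    (hms : ∀ i, x i + 1 ≤ M) :
    Fobj 2 M x ≤ 2 * (M - P.length) + P.length + mP := by
  classical
  obtain ⟨hchain, hnodupP, _⟩ := hcrit
  haveI : IsTrans ι prec := ⟨fun _ _ _ h h' => htrans h h'⟩
  have hpair : P.Pairwise prec := List.isChain_iff_pairwise.mp hchain
  have hlt : P.Pairwise (fun a b => x a < x b) :=
    hpair.imp (fun h => hfeas _ _ h)
  have hmapnd : (P.map x).Nodup :=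
    List.pairwise_map.mpr (hlt.imp fun h => Nat.ne_of_lt h)
  have hinj : ∀ a ∈ P, ∀ b ∈ P, x a = x b → a = b :=
    List.inj_on_of_nodup_map hmapnd
  set T : Finset ℕ := (P.map x).toFinset with hT
  have hTcard : T.card = P.length := by
    rw [hT, List.toFinset_card_of_nodup hmapnd, List.length_map]
  have hTsub : T ⊆ Finset.range M := by
    intro τ hτ
    rw [hT, List.mem_toFinset, List.mem_map] at hτ
    obtain ⟨i, _, rfl⟩ := hτ
    exact Finset.mem_range.mpr (Nat.lt_of_succ_le (hms i))
  set B : Finset ℕ := T.filter (fun τ => 2 ≤ loadAt x τ) with hB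
  -- key existence statement for times in B
  have key : ∀ τ ∈ B, ∃ i j, i ∈ P ∧ j ∉ P ∧ x i = τ ∧ x j = τ ∧ i ≠ j := by
    intro τ hτ
    rw [hB, Finset.mem_filter] at hτ
    obtain ⟨hτT, hload⟩ := hτ
    rw [hT, List.mem_toFinset, List.mem_map] at hτT
    obtain ⟨i, hiP, hxi⟩ := hτT
    have h2 : 1 < (univ.filter fun k => x k = τ).card := hload
    obtain ⟨a, ha, b, hb, hab⟩ := Finset.one_lt_card.mp h2
    rw [Finset.mem_filter] at ha hb
    -- one of a, b differs from i
    by_cases hai : a = i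
    · subst hai
      refine ⟨a, b, hiP, ?_, ha.2, hb.2, hab⟩
      intro hbP
      exact hab (hinj a hiP b hbP (ha.2.trans hb.2.symm))
    · refine ⟨i, a, hiP, ?_, hxi, ha.2, fun h => hai h.symm⟩
      intro haP
      exact hai (hinj a haP i hiP (ha.2.trans hxi.symm))
  choose fi fj hfiP hfjP hfix hfjx hfij using key
  set pairs : Finset (ι × ι) := B.attach.image (fun τ => (fi τ.1 τ.2, fj τ.1 τ.2))
    with hpairs
  have hmatch : IsMatching (fun i j => i ∈ P ∧ j ∉ P ∧ IndepJobs prec i j) pairs := by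
    constructor
    · rintro e he
      rw [hpairs, Finset.mem_image] at he
      obtain ⟨⟨τ, hτ⟩, -, rfl⟩ := he
      refine ⟨hfiP τ hτ, hfjP τ hτ, hfij τ hτ, ?_, ?_⟩
      · intro hp
        have := hfeas _ _ hp
        rw [hfix τ hτ, hfjx τ hτ] at this; omega
      · intro hp
        have := hfeas _ _ hp
        rw [hfix τ hτ, hfjx τ hτ] at this; omega
    · rintro e he f hf hef
      rw [hpairs, Finset.mem_image] at he hf
      obtain ⟨⟨τ, hτ⟩, -, rfl⟩ := he
      obtain ⟨⟨σ, hσ⟩, -, rfl⟩ := hf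
      have hτσ : τ ≠ σ := by
        rintro rfl; exact hef rfl
      refine ⟨?_, ?_, ?_, ?_⟩ <;>
        · intro h
          apply hτσ
          first
          | exact (hfix τ hτ).symm.trans ((congrArg x h).trans (hfix σ hσ))
          | exact (hfix τ hτ).symm.trans ((congrArg x h).trans (hfjx σ hσ))
          | exact (hfjx τ hτ).symm.trans ((congrArg x h).trans (hfix σ hσ))
          | exact (hfjx τ hτ).symm.trans ((congrArg x h).trans (hfjx σ hσ))
  have hcardpairs : pairs.card = B.card := by
    rw [hpairs]
    rw [Finset.card_image_of_injOn, Finset.card_attach]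
    rintro ⟨τ, hτ⟩ - ⟨σ, hσ⟩ - h
    have : fi τ hτ = fi σ hσ := congrArg Prod.fst h
    have : τ = σ := (hfix τ hτ).symm.trans ((congrArg x this).trans (hfix σ hσ))
    exact Subtype.ext this
  have hBle : B.card ≤ mP := by
    rw [← hcardpairs]; exact hmP.2 pairs hmatch
  -- split the sum
  have hsplit : Fobj 2 M x =
      (∑ τ ∈ Finset.range M \ T, min 2 (loadAt x τ)) +
      (∑ τ ∈ T, min 2 (loadAt x τ)) := by
    rw [Fobj, ← Finset.sum_sdiff hTsub]
  have hout : (∑ τ ∈ Finset.range M \ T, min 2 (loadAt x τ)) ≤ 2 * (M - P.length) := by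
    calc (∑ τ ∈ Finset.range M \ T, min 2 (loadAt x τ))
        ≤ ∑ _τ ∈ Finset.range M \ T, 2 :=
          Finset.sum_le_sum (fun τ _ => Nat.min_le_left _ _)
      _ = 2 * (M - P.length) := by
          rw [Finset.sum_const, Finset.card_sdiff_of_subset hTsub, Finset.card_range, hTcard,
            smul_eq_mul, Nat.mul_comm]
  have hin : (∑ τ ∈ T, min 2 (loadAt x τ)) ≤ P.length + B.card := by
    calc (∑ τ ∈ T, min 2 (loadAt x τ))
        ≤ ∑ τ ∈ T, (1 + if 2 ≤ loadAt x τ then 1 else 0) := by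
          refine Finset.sum_le_sum (fun τ hτ => ?_)
          split_ifs with h <;> omega
      _ = T.card + B.card := by
          rw [Finset.sum_add_distrib, Finset.sum_const, smul_eq_mul, mul_one,
            hB, Finset.card_filter]
      _ = P.length + B.card := by rw [hTcard]
  calc Fobj 2 M x ≤ 2 * (M - P.length) + (P.length + B.card) := by
        rw [hsplit]; exact Nat.add_le_add hout hin
    _ ≤ 2 * (M - P.length) + P.length + mP := by omega
end

section
/- In any feasible schedule of a set of unit-time jobs with a precedence DAG G, at least |P| − m*_P jobs of the critical path P are the unique job scheduled at their time step, where m*_P is the maximum matching size in the bipartite independence graph between P and J∖P. -/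
open Finset

variable {ι : Type*}

variable [Fintype ι] [DecidableEq ι]

/-- In any feasible schedule, at least `|P| − m*_P` jobs of the critical path `P`
are the unique job scheduled at their time step. -/
theorem stmt4 {ι : Type*} [Fintype ι] [DecidableEq ι] (prec : ι → ι → Prop)
    (htrans : Transitive prec) (hirr : ∀ i, ¬ prec i i)
    (P : List ι) (hcrit : IsCriticalPath prec P)
    (mP : ℕ)
    (hmP : IsMaxMatchingSize (fun i j => i ∈ P ∧ j ∉ P ∧ IndepJobs prec i j) mP)
    (x : ι → ℕ)
    (hfeas : ∀ i j, prec i j → x i + 1 ≤ x j) :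
    P.length - mP ≤ (P.toFinset.filter fun i => ∀ j, x j = x i → j = i).card := by
  classical
  obtain ⟨hchain, hnodup, -⟩ := hcrit
  haveI : IsTrans ι prec := ⟨fun a b c h h' => htrans h h'⟩
  have hpair : P.Pairwise prec := List.isChain_iff_pairwise.mp hchain
  have hcomp : ∀ ⦃i⦄, i ∈ P → ∀ ⦃j⦄, j ∈ P → i ≠ j → prec i j ∨ prec j i := by
    have h2 : P.Pairwise (fun a b => prec a b ∨ prec b a) := hpair.imp Or.inl
    haveI : Std.Symm (fun a b => prec a b ∨ prec b a) := ⟨fun a b h => h.symm⟩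
    exact h2.forall
  have hne : ∀ ⦃i⦄, i ∈ P → ∀ ⦃j⦄, j ∈ P → i ≠ j → x i ≠ x j := by
    intro i hi j hj hij
    rcases hcomp hi hj hij with h | h
    · have := hfeas _ _ h; omega
    · have := hfeas _ _ h; omega
  set S := P.toFinset.filter (fun i => ¬ ∀ j, x j = x i → j = i) with hS
  have hex : ∀ i ∈ S, ∃ j, j ≠ i ∧ x j = x i := by
    intro i hi
    simp only [hS, Finset.mem_filter] at hi
    push_neg at hi
    obtain ⟨-, j, hj1, hj2⟩ := hi
    exact ⟨j, hj2, hj1⟩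
  set f : ι → ι := fun i => if h : ∃ j, j ≠ i ∧ x j = x i then h.choose else i with hf
  have hfspec : ∀ i ∈ S, f i ≠ i ∧ x (f i) = x i := by
    intro i hi
    have h := hex i hi
    simp only [hf, dif_pos h]
    exact h.choose_spec
  have hmemP : ∀ i ∈ S, i ∈ P := by
    intro i hi
    simp only [hS, Finset.mem_filter, List.mem_toFinset] at hi
    exact hi.1
  have hfnP : ∀ i ∈ S, f i ∉ P := by
    intro i hi hmem
    exact hne hmem (hmemP i hi) (hfspec i hi).1 (hfspec i hi).2
  set pairs : Finset (ι × ι) := S.image (fun i => (i, f i)) with hpairs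
  have hcard : pairs.card = S.card :=
    Finset.card_image_of_injOn (fun a _ b _ h => (Prod.mk.injEq _ _ _ _ ▸ h).1)
  have hnprec : ∀ i ∈ S, ¬ prec i (f i) ∧ ¬ prec (f i) i := by
    intro i hi
    have hx := (hfspec i hi).2
    constructor
    · intro h; have := hfeas _ _ h; omega
    · intro h; have := hfeas _ _ h; omega
  have hmatch : IsMatching (fun i j => i ∈ P ∧ j ∉ P ∧ IndepJobs prec i j) pairs := by
    constructor
    · intro e he
      simp only [hpairs, Finset.mem_image] at he
      obtain ⟨i, hi, rfl⟩ := he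
      exact ⟨hmemP i hi, hfnP i hi, (hfspec i hi).1.symm, (hnprec i hi).1, (hnprec i hi).2⟩
    · intro e he e' he' hee
      simp only [hpairs, Finset.mem_image] at he he'
      obtain ⟨i, hi, rfl⟩ := he
      obtain ⟨i', hi', rfl⟩ := he'
      have hii : i ≠ i' := fun h => hee (by rw [h])
      refine ⟨hii, ?_, ?_, ?_⟩
      · intro h; exact hfnP i' hi' ((show i = f i' from h) ▸ hmemP i hi)
      · intro h; exact hfnP i hi ((show i' = f i from h.symm) ▸ hmemP i' hi')
      · intro h
        have h1 := (hfspec i hi).2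
        have h2 := (hfspec i' hi').2
        have h3 : x (f i) = x (f i') := congrArg x (show f i = f i' from h)
        exact hne (hmemP i hi) (hmemP i' hi') hii (by rw [← h1, ← h2, h3])
  have hle : S.card ≤ mP := hcard ▸ hmP.2 pairs hmatch
  have hlen : P.toFinset.card = P.length := List.toFinset_card_of_nodup hnodup
  have hsplit : (P.toFinset.filter (fun i => ∀ j, x j = x i → j = i)).card + S.card
      = P.length := by
    rw [hS, ← hlen]
    exact Finset.card_filter_add_card_filter_not _
  omega
end

section
/- For a DAG G of unit-time jobs and makespan deadline M with |P| ≤ M ≤ |J| − m*, every schedule achieving the optimal value F*(M) has makespan exactly M. -/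
open Finset

variable {ι : Type*}

variable [Fintype ι] [DecidableEq ι]

/-- For `|P| ≤ M ≤ |J| − m*`, every optimal schedule has makespan exactly `M`. -/
theorem stmt6 {ι : Type*} [Fintype ι] [DecidableEq ι] (prec : ι → ι → Prop)
    (htrans : Transitive prec) (hirr : ∀ i, ¬ prec i i)
    (P : List ι) (hcrit : IsCriticalPath prec P)
    (mstar : ℕ)
    (hmstar : IsMaxMatchingSize (IndepJobs prec) mstar)
    (M : ℕ) (hM1 : P.length ≤ M) (hM2 : M ≤ Fintype.card ι - mstar)
    (x : ι → ℕ)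
    (hfeas : ∀ i j, prec i j → x i + 1 ≤ x j)
    (hms : ∀ i, x i + 1 ≤ M)
    (hopt : ∀ y : ι → ℕ, (∀ i j, prec i j → y i + 1 ≤ y j) → (∀ i, y i + 1 ≤ M) →
      Fobj 2 M y ≤ Fobj 2 M x) :
    univ.sup (fun i => x i + 1) = M := by
  classical
  by_contra hne
  have hsup_le : univ.sup (fun i => x i + 1) ≤ M := Finset.sup_le fun i _ => hms i
  have hsup_lt : univ.sup (fun i => x i + 1) < M := lt_of_le_of_ne hsup_le hne
  -- mstar ≤ card ι
  have hm_le_n : mstar ≤ Fintype.card ι := by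
    obtain ⟨pairs, hmat, hc⟩ := hmstar.1
    have h := Finset.card_le_card_of_injOn (fun e : ι × ι => e.1)
      (fun e _ => mem_univ e.1)
      (by
        intro e he f hf hef
        by_contra h
        exact (hmat.2 e he f hf h).1 hef)
    rw [hc, Finset.card_univ] at h
    exact h
  rcases isEmpty_or_nonempty ι with hemp | hne'
  · have hcard0 : Fintype.card ι = 0 := Fintype.card_eq_zero
    have hM0 : M = 0 := by omega
    have : (univ : Finset ι) = ∅ := univ_eq_empty
    rw [this, Finset.sup_empty] at hne
    exact hne (by simp [hM0])
  -- every job finishes strictly before M-1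
  have hxlt : ∀ i, x i + 2 ≤ M := by
    intro i
    have h : x i + 1 ≤ univ.sup (fun i => x i + 1) :=
      Finset.le_sup (f := fun i => x i + 1) (mem_univ i)
    omega
  obtain ⟨i0⟩ := hne'
  haveI : Inhabited ι := ⟨i0⟩
  have hM2' : 2 ≤ M := by have := hxlt i0; omega
  have hMn : M + mstar ≤ Fintype.card ι := by omega
  -- total load
  have hsum : ∑ τ ∈ range (M - 1), loadAt x τ = Fintype.card ι := by
    rw [← Finset.card_univ]
    rw [Finset.card_eq_sum_card_fiberwise (f := x) (t := range (M - 1))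
      (fun i _ => mem_range.mpr (by have := hxlt i; omega))]
    rfl
  -- a heavy slot exists
  have hheavy : ∃ τ, 3 ≤ loadAt x τ := by
    by_contra hno
    push_neg at hno
    set S : Finset ℕ := (range (M - 1)).filter (fun τ => 2 ≤ loadAt x τ) with hSdef
    have hpick : ∀ τ ∈ S, ∃ a b : ι, x a = τ ∧ x b = τ ∧ a ≠ b := by
      intro τ hτ
      have h2 : 1 < (univ.filter fun i => x i = τ).card := by
        have := (mem_filter.mp hτ).2
        simpa [loadAt] using lt_of_lt_of_le one_lt_two this
      obtain ⟨a, ha, b, hb, hab⟩ := Finset.one_lt_card.mp h2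
      exact ⟨a, b, (mem_filter.mp ha).2, (mem_filter.mp hb).2, hab⟩
    choose! a b ha hb hab using hpick
    set pairs : Finset (ι × ι) := S.image (fun τ => (a τ, b τ)) with hpairsdef
    have hmatch : IsMatching (IndepJobs prec) pairs := by
      constructor
      · intro e he
        obtain ⟨τ, hτ, rfl⟩ := mem_image.mp he
        refine ⟨hab τ hτ, ?_, ?_⟩
        · intro hp
          have := hfeas _ _ hp
          rw [ha τ hτ, hb τ hτ] at this; omega
        · intro hp
          have := hfeas _ _ hp
          rw [ha τ hτ, hb τ hτ] at this; omega
      · intro e he f hf hef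
        obtain ⟨τ, hτ, rfl⟩ := mem_image.mp he
        obtain ⟨σ, hσ, rfl⟩ := mem_image.mp hf
        have hτσ : τ ≠ σ := by rintro rfl; exact hef rfl
        refine ⟨?_, ?_, ?_, ?_⟩ <;> intro h <;> apply hτσ
        · rw [← ha τ hτ, ← ha σ hσ]; exact congrArg x h
        · rw [← ha τ hτ, ← hb σ hσ]; exact congrArg x h
        · rw [← hb τ hτ, ← ha σ hσ]; exact congrArg x h
        · rw [← hb τ hτ, ← hb σ hσ]; exact congrArg x h
    have hcardS : pairs.card = S.card := by
      apply Finset.card_image_of_injOn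
      intro τ hτ σ hσ h
      have := congrArg (fun p : ι × ι => x p.1) h
      simp only at this
      rw [ha τ hτ, ha σ hσ] at this
      exact this
    have hSm : S.card ≤ mstar := by
      have := hmstar.2 pairs hmatch
      omega
    -- counting
    have hcount : ∑ τ ∈ range (M - 1), loadAt x τ ≤
        ∑ τ ∈ range (M - 1), (1 + if 2 ≤ loadAt x τ then 1 else 0) := by
      apply Finset.sum_le_sum
      intro τ _
      have := hno τ
      split_ifs <;> omega
    have hite : ∑ τ ∈ range (M - 1), (if 2 ≤ loadAt x τ then 1 else 0) = S.card := by
      rw [hSdef, Finset.card_filter]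
    rw [Finset.sum_add_distrib, Finset.sum_const, hite, hsum] at hcount
    simp only [smul_eq_mul, mul_one, Finset.card_range] at hcount
    omega
  obtain ⟨τ₀, hτ₀⟩ := hheavy
  -- pick a job k at τ₀
  have hkex : ∃ k, x k = τ₀ := by
    have h0 : 0 < (univ.filter fun i => x i = τ₀).card := by
      have : loadAt x τ₀ = (univ.filter fun i => x i = τ₀).card := rfl
      omega
    obtain ⟨k, hk⟩ := Finset.card_pos.mp h0
    exact ⟨k, (mem_filter.mp hk).2⟩
  obtain ⟨k, hk⟩ := hkex
  have hτ₀M : τ₀ + 2 ≤ M := by have := hxlt k; omega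
  -- the improved schedule
  set y : ι → ℕ := fun i => if x i ≤ τ₀ ∧ i ≠ k then x i else x i + 1 with hydef
  have hyval : ∀ i, y i = if x i ≤ τ₀ ∧ i ≠ k then x i else x i + 1 := fun i => rfl
  have hyfeas : ∀ i j, prec i j → y i + 1 ≤ y j := by
    intro i j hp
    have hij := hfeas i j hp
    rw [hyval i, hyval j]
    split_ifs with h1 h2 h2
    · omega
    · omega
    · -- impossible-ish: x i > τ₀ or i = k, and x j ≤ τ₀
      by_cases hxi : x i ≤ τ₀
      · have hik : i = k := by
          by_contra hik
          exact h1 ⟨hxi, hik⟩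
        subst hik
        omega
      · omega
    · omega
  have hyms : ∀ i, y i + 1 ≤ M := by
    intro i
    rw [hyval i]
    have := hxlt i
    split_ifs <;> omega
  -- load computations
  have hload1 : ∀ τ, τ < τ₀ → loadAt y τ = loadAt x τ := by
    intro τ hτ
    unfold loadAt
    congr 1
    ext i
    simp only [mem_filter, mem_univ, true_and, hyval i]
    by_cases hik : i = k
    · subst hik
      simp only [hk]
      split_ifs <;> omega
    · split_ifs with h
      · exact Iff.rfl
      · have : ¬ x i ≤ τ₀ := fun hle => h ⟨hle, hik⟩
        omega
  have hload2 : loadAt y τ₀ = loadAt x τ₀ - 1 := by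
    have hfe : (univ.filter fun i => y i = τ₀) = (univ.filter fun i => x i = τ₀).erase k := by
      ext i
      simp only [mem_erase, mem_filter, mem_univ, true_and, hyval i]
      by_cases hik : i = k
      · subst hik
        simp only [hk]
        split_ifs with h
        · exact absurd rfl h.2
        · constructor
          · omega
          · rintro ⟨h1, _⟩; exact absurd rfl h1
      · split_ifs with h
        · constructor
          · intro he; exact ⟨hik, he⟩
          · rintro ⟨_, he⟩; exact he
        · have : ¬ x i ≤ τ₀ := fun hle => h ⟨hle, hik⟩
          constructor
          · omega
          · rintro ⟨_, he⟩; omega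
    unfold loadAt
    rw [hfe, Finset.card_erase_of_mem (mem_filter.mpr ⟨mem_univ k, hk⟩)]
  have hload3 : loadAt y (τ₀ + 1) = 1 := by
    have hfe : (univ.filter fun i => y i = τ₀ + 1) = {k} := by
      ext i
      simp only [mem_filter, mem_univ, true_and, mem_singleton, hyval i]
      by_cases hik : i = k
      · subst hik
        simp only [hk, ne_eq, not_true_eq_false, and_false, if_false]
        try omega
      · simp only [hik, iff_false]
        split_ifs with h
        · omega
        · have : ¬ x i ≤ τ₀ := fun hle => h ⟨hle, hik⟩
          omega
    unfold loadAt
    rw [hfe, Finset.card_singleton]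
  have hload4 : ∀ τ, τ₀ + 1 ≤ τ → loadAt y (τ + 1) = loadAt x τ := by
    intro τ hτ
    unfold loadAt
    congr 1
    ext i
    simp only [mem_filter, mem_univ, true_and, hyval i]
    by_cases hik : i = k
    · subst hik
      simp only [hk]
      split_ifs <;> omega
    · split_ifs with h
      · omega
      · have : ¬ x i ≤ τ₀ := fun hle => h ⟨hle, hik⟩
        omega
  have hload5 : loadAt x (M - 1) = 0 := by
    unfold loadAt
    rw [Finset.card_eq_zero]
    ext i
    simp only [mem_filter, mem_univ, true_and, Finset.notMem_empty, iff_false]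
    have := hxlt i
    omega
  -- objective comparison
  have hFx : Fobj 2 M x = (∑ τ ∈ range (τ₀ + 1), min 2 (loadAt x τ))
      + ∑ τ ∈ Finset.Ico (τ₀ + 1) (M - 1), min 2 (loadAt x τ) := by
    unfold Fobj
    have hMsplit : M = (M - 1) + 1 := by omega
    conv_lhs => rw [hMsplit, Finset.sum_range_succ]
    rw [hload5]
    simp only [Nat.min_zero, add_zero]
    rw [Finset.range_eq_Ico, ← Finset.sum_Ico_consecutive _ (Nat.zero_le (τ₀ + 1)) (by omega :
      τ₀ + 1 ≤ M - 1), ← Finset.range_eq_Ico]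
  have hFy : Fobj 2 M y = (∑ τ ∈ range (τ₀ + 1), min 2 (loadAt x τ)) + 1
      + ∑ τ ∈ Finset.Ico (τ₀ + 1) (M - 1), min 2 (loadAt x τ) := by
    unfold Fobj
    rw [Finset.range_eq_Ico, ← Finset.sum_Ico_consecutive _ (Nat.zero_le (τ₀ + 2)) (by omega :
      τ₀ + 2 ≤ M), ← Finset.range_eq_Ico]
    have h1 : ∑ τ ∈ range (τ₀ + 2), min 2 (loadAt y τ)
        = (∑ τ ∈ range (τ₀ + 1), min 2 (loadAt y τ)) + min 2 (loadAt y (τ₀ + 1)) :=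
      Finset.sum_range_succ _ _
    rw [h1, hload3]
    have h2 : ∑ τ ∈ range (τ₀ + 1), min 2 (loadAt y τ)
        = ∑ τ ∈ range (τ₀ + 1), min 2 (loadAt x τ) := by
      apply Finset.sum_congr rfl
      intro τ hτ
      rw [mem_range] at hτ
      rcases lt_or_eq_of_le (Nat.lt_succ_iff.mp hτ) with h | h
      · rw [hload1 τ h]
      · subst h
        rw [hload2]
        have : min 2 (loadAt x τ - 1) = 2 := by omega
        rw [this]
        omega
    rw [h2]
    have h3 : ∑ τ ∈ Finset.Ico (τ₀ + 2) M, min 2 (loadAt y τ)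
        = ∑ τ ∈ Finset.Ico (τ₀ + 1) (M - 1), min 2 (loadAt x τ) := by
      rw [Finset.sum_Ico_eq_sum_range, Finset.sum_Ico_eq_sum_range]
      have hlen : M - (τ₀ + 2) = M - 1 - (τ₀ + 1) := by omega
      rw [hlen]
      apply Finset.sum_congr rfl
      intro i _
      have : τ₀ + 2 + i = (τ₀ + 1 + i) + 1 := by omega
      rw [this, hload4 (τ₀ + 1 + i) (by omega)]
    rw [h3]
    simp [min_def]
  have := hopt y hyfeas hyms
  omega
end

section
/- Let x be a feasible schedule with makespan equal to the critical path length |P| for a DAG of unit-time jobs, and suppose there is an augmenting sequence (i_0, j_1, i_1, ..., j_r, i_r, j_{r+1}) of distinct jobs, forming a path in the bipartite independence graph G̃_P, such that i_0 is the only job scheduled at x_{i_0}, at least three jobs are scheduled at x_{j_{r+1}}, and x_{i_q} = x_{j_q} for all q ∈ {1,...,r}. Then there exists a feasible schedule x' with makespan |P| such that F(x') = F(x) + 1. -/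
open Finset

variable {ι : Type*}

variable [Fintype ι] [DecidableEq ι]

set_option linter.unusedSectionVars false
namespace RL7

/-- `ℕ`-distance, omega-friendly. -/
def gp (a b : ℕ) : ℕ := (a - b) + (b - a)

section Basics

variable {prec : ι → ι → Prop} {P : List ι} {x : ι → ℕ}

lemma pairwise_of_chain (htrans : Transitive prec) (h : P.Chain' prec) : P.Pairwise prec := by
  haveI : IsTrans ι prec := ⟨fun a b c hab hbc => htrans hab hbc⟩
  exact List.isChain_iff_pairwise.mp h

lemma prec_get (hpw : P.Pairwise prec) {k l : ℕ} (hkl : k < l) (hl : l < P.length) :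
    prec (P.get ⟨k, lt_trans hkl hl⟩) (P.get ⟨l, hl⟩) :=
  List.pairwise_iff_get.mp hpw ⟨k, lt_trans hkl hl⟩ ⟨l, hl⟩ hkl

variable (hfeas : ∀ u v, prec u v → x u + 1 ≤ x v) (hms : ∀ u, x u + 1 ≤ P.length)

include hfeas in
lemma x_get_mono (hpw : P.Pairwise prec) :
    ∀ (l : ℕ) (hl : l < P.length) (k : ℕ) (hkl : k ≤ l),
      x (P.get ⟨k, lt_of_le_of_lt hkl hl⟩) + (l - k) ≤ x (P.get ⟨l, hl⟩) := by
  intro l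
  induction l with
  | zero => intro hl k hkl; interval_cases k; simp
  | succ m ih =>
    intro hl k hkl
    rcases Nat.eq_or_lt_of_le hkl with h | h
    · subst h; simp
    · have hkm : k ≤ m := by omega
      have hm : m < P.length := by omega
      have h1 := ih hm k hkm
      have h2 := hfeas _ _ (prec_get hpw (show m < m + 1 by omega) hl)
      omega

include hfeas hms in
lemma x_get (hpw : P.Pairwise prec) {k : ℕ} (hk : k < P.length) :
    x (P.get ⟨k, hk⟩) = k := by
  have low := x_get_mono hfeas hpw k hk 0 (Nat.zero_le _)
  have hn1 : P.length - 1 < P.length := by omega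
  have up := x_get_mono hfeas hpw (P.length - 1) hn1 k (by omega)
  have hms' := hms (P.get ⟨P.length - 1, hn1⟩)
  omega

include hfeas hms in
lemma eq_get_of_mem (hpw : P.Pairwise prec) {u : ι} (hu : u ∈ P) {τ : ℕ} (hτ : x u = τ)
    (hτn : τ < P.length) : u = P.get ⟨τ, hτn⟩ := by
  obtain ⟨k, rfl⟩ := List.mem_iff_get.mp hu
  have := x_get hfeas hms hpw k.isLt
  have hk : (k : ℕ) = τ := by rw [← hτ]; exact (by simpa using this.symm)
  subst hk
  rfl

end Basics

section Loads

variable {x : ι → ℕ}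

lemma le_loadAt_of_two {u v : ι} {τ : ℕ} (hu : x u = τ) (hv : x v = τ) (huv : u ≠ v) :
    2 ≤ loadAt x τ := by
  have hsub : ({u, v} : Finset ι) ⊆ univ.filter fun w => x w = τ := by
    intro w hw
    simp only [mem_insert, mem_singleton] at hw
    rcases hw with rfl | rfl <;> simp [hu, hv]
  calc 2 = ({u, v} : Finset ι).card := (Finset.card_pair huv).symm
    _ ≤ _ := Finset.card_le_card hsub

lemma mem_of_load_two {u v w : ι} {τ : ℕ} (hl : loadAt x τ = 2) (hu : x u = τ) (hv : x v = τ)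
    (huv : u ≠ v) (hw : x w = τ) : w = u ∨ w = v := by
  have hsub : ({u, v} : Finset ι) ⊆ univ.filter fun w => x w = τ := by
    intro w hw
    simp only [mem_insert, mem_singleton] at hw
    rcases hw with rfl | rfl <;> simp [hu, hv]
  have hcard : (univ.filter fun w => x w = τ).card ≤ ({u, v} : Finset ι).card := by
    rw [Finset.card_pair huv]; exact le_of_eq hl
  have := Finset.eq_of_subset_of_card_le hsub hcard
  have hwmem : w ∈ ({u, v} : Finset ι) := by rw [this]; simp [hw]
  simpa using hwmem

lemma loadAt_alone {i0 : ι} {τ : ℕ} (hτ : x i0 = τ) (hal : ∀ w, x w = τ → w = i0) :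
    loadAt x τ = 1 := by
  have : (univ.filter fun w => x w = τ) = {i0} := by
    ext w
    simp only [mem_filter, mem_univ, true_and, mem_singleton]
    exact ⟨fun h => hal w h, fun h => h ▸ hτ⟩
  rw [loadAt, this, Finset.card_singleton]

open Function

lemma loadAt_update_other {w : ι} {s τ : ℕ} (h1 : τ ≠ s) (h2 : τ ≠ x w) :
    loadAt (update x w s) τ = loadAt x τ := by
  unfold loadAt
  congr 1
  apply Finset.filter_congr
  intro v _
  by_cases hv : v = w
  · subst hv; simp [update_self, h1.symm, h2.symm]
  · simp [update_of_ne hv]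

lemma loadAt_update_target {w : ι} {s : ℕ} (h : x w ≠ s) :
    loadAt (update x w s) s = loadAt x s + 1 := by
  unfold loadAt
  have : (univ.filter fun v => update x w s v = s) = insert w (univ.filter fun v => x v = s) := by
    ext v
    by_cases hv : v = w
    · subst hv; simp [update_self]
    · simp [update_of_ne hv, hv]
  rw [this, Finset.card_insert_of_notMem (by simp [h])]

lemma loadAt_update_src {w : ι} {s : ℕ} (h : x w ≠ s) :
    loadAt (update x w s) (x w) + 1 = loadAt x (x w) := by
  unfold loadAt
  have : (univ.filter fun v => update x w s v = x w)
      = (univ.filter fun v => x v = x w).erase w := by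
    ext v
    by_cases hv : v = w
    · subst hv; simp [update_self, h, Ne.symm h]
    · simp [update_of_ne hv, hv]
  rw [this, Finset.card_erase_add_one (by simp)]

end Loads


section FobjMove

open Function

variable {x : ι → ℕ}

lemma sum_split {n s t : ℕ} (f : ℕ → ℕ) (hs : s < n) (ht : t < n) (hst : s ≠ t) :
    ∑ τ ∈ range n, f τ = f s + f t + ∑ τ ∈ ((range n).erase s).erase t, f τ := by
  have h1 : t ∈ (range n).erase s := by
    rw [Finset.mem_erase]; exact ⟨fun h => hst h.symm, Finset.mem_range.mpr ht⟩
  rw [← Finset.add_sum_erase _ f (Finset.mem_range.mpr hs), ← Finset.add_sum_erase _ f h1]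
  ring

lemma Fobj_move {w : ι} {s n : ℕ} (hwn : x w < n) (hsn : s < n) (hne : x w ≠ s) :
    Fobj 2 n (update x w s) + min 2 (loadAt x s) + min 2 (loadAt x (x w)) =
    Fobj 2 n x + min 2 (loadAt x s + 1) + min 2 (loadAt x (x w) - 1) := by
  unfold Fobj
  rw [sum_split _ hsn hwn (Ne.symm hne), sum_split _ hsn hwn (Ne.symm hne)]
  have e1 : loadAt (update x w s) s = loadAt x s + 1 := loadAt_update_target hne
  have e2 : loadAt (update x w s) (x w) = loadAt x (x w) - 1 := by
    have := loadAt_update_src hne; omega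
  have e3 : ∑ τ ∈ ((range n).erase s).erase (x w), min 2 (loadAt (update x w s) τ)
      = ∑ τ ∈ ((range n).erase s).erase (x w), min 2 (loadAt x τ) := by
    apply Finset.sum_congr rfl
    intro τ hτ
    rw [Finset.mem_erase, Finset.mem_erase] at hτ
    rw [loadAt_update_other hτ.2.1 hτ.1]
  rw [e1, e2, e3]
  ring

lemma Fobj_move_eq {w : ι} {s n : ℕ} (hwn : x w < n) (hsn : s < n) (hne : x w ≠ s)
    (hsrc : loadAt x (x w) = 2) (hdst : loadAt x s = 1) :
    Fobj 2 n (update x w s) = Fobj 2 n x := by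
  have := Fobj_move hwn hsn hne
  rw [hsrc, hdst] at this
  norm_num at this
  omega

lemma Fobj_move_succ {w : ι} {s n : ℕ} (hwn : x w < n) (hsn : s < n) (hne : x w ≠ s)
    (hsrc : 3 ≤ loadAt x (x w)) (hdst : loadAt x s = 1) :
    Fobj 2 n (update x w s) = Fobj 2 n x + 1 := by
  have h := Fobj_move hwn hsn hne
  rw [hdst] at h
  have e1 : min 2 (loadAt x (x w)) = 2 := min_eq_left (by omega)
  have e2 : min 2 (loadAt x (x w) - 1) = 2 := min_eq_left (by omega)
  rw [e1, e2] at h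
  norm_num at h
  omega

lemma feas_update {prec : ι → ι → Prop} (hirr : ∀ u, ¬ prec u u)
    (hfeas : ∀ u v, prec u v → x u + 1 ≤ x v) {w : ι} {s : ℕ}
    (hpred : ∀ u, prec u w → x u + 1 ≤ s) (hsucc : ∀ v, prec w v → s + 1 ≤ x v) :
    ∀ u v, prec u v → update x w s u + 1 ≤ update x w s v := by
  intro u v huv
  by_cases hu : u = w <;> by_cases hv : v = w
  · rw [hu, hv] at huv; exact absurd huv (hirr _)
  · rw [hu] at huv ⊢
    rw [Function.update_self, Function.update_of_ne hv]
    exact hsucc _ huv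
  · rw [hv] at huv ⊢
    rw [Function.update_self, Function.update_of_ne hu]
    exact hpred _ huv
  · rw [Function.update_of_ne hu, Function.update_of_ne hv]
    exact hfeas _ _ huv

lemma ms_update {w : ι} {s n : ℕ} (hms : ∀ u, x u + 1 ≤ n) (hsn : s + 1 ≤ n) :
    ∀ u, update x w s u + 1 ≤ n := by
  intro u
  by_cases hu : u = w
  · subst hu; rw [update_self]; exact hsn
  · rw [update_of_ne hu]; exact hms u

end FobjMove

section AugDef

variable (prec : ι → ι → Prop) (P : List ι)

/-- Bundled hypotheses for a (normalized) augmenting sequence. -/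
structure Aug (x : ι → ℕ) (r : ℕ) (i j : ℕ → ι) : Prop where
  hfeas : ∀ u v, prec u v → x u + 1 ≤ x v
  hms : ∀ u, x u + 1 ≤ P.length
  hiP : ∀ q, q ≤ r → i q ∈ P
  hjP : ∀ q, 1 ≤ q → q ≤ r + 1 → j q ∉ P
  hinjj : ∀ q q', 1 ≤ q → q ≤ r + 1 → 1 ≤ q' → q' ≤ r + 1 → j q = j q' → q = q'
  h1 : ∀ q, q ≤ r → IndepJobs prec (i q) (j (q + 1))
  h2 : ∀ q, 1 ≤ q → q ≤ r → IndepJobs prec (j q) (i q)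
  hsame : ∀ q, 1 ≤ q → q ≤ r → x (i q) = x (j q)
  halone : ∀ w, x w = x (i 0) → w = i 0
  hthree : 3 ≤ loadAt x (x (j (r + 1)))
  hnorm : ∀ q, 1 ≤ q → q ≤ r → loadAt x (x (j q)) = 2

def meas (x : ι → ℕ) (r : ℕ) (i j : ℕ → ι) : ℕ :=
  2 * (∑ q ∈ range (r + 1), gp (x (i q)) (x (j (q + 1)))) - r

end AugDef

section AugFacts

variable {prec : ι → ι → Prop} {P : List ι} {x : ι → ℕ} {r : ℕ} {i j : ℕ → ι}

lemma Aug.load_a (A : Aug prec P x r i j) : loadAt x (x (i 0)) = 1 :=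
  loadAt_alone rfl A.halone

lemma Aug.load_j1 (A : Aug prec P x r i j) : 2 ≤ loadAt x (x (j 1)) := by
  rcases Nat.eq_zero_or_pos r with hr | hr
  · subst hr; have h := A.hthree; norm_num at h; omega
  · rw [A.hnorm 1 le_rfl hr]

lemma Aug.slot_ne (A : Aug prec P x r i j) : x (i 0) ≠ x (j 1) := by
  intro h
  have := A.load_a
  have := A.load_j1
  rw [← h] at this
  omega

/-- gaps of a normalized augmenting sequence are positive -/
lemma Aug.gap_pos (A : Aug prec P x r i j) :
    ∀ q, q ≤ r → 1 ≤ gp (x (i q)) (x (j (q + 1))) := by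
  intro q hq
  have hne : x (i q) ≠ x (j (q + 1)) := by
    rcases Nat.eq_zero_or_pos q with h0 | h0
    · subst h0
      exact A.slot_ne
    · -- q ≥ 1 : x (i q) = x (j q)
      have hsq := A.hsame q h0 hq
      rw [hsq]
      rcases Nat.lt_or_ge q r with hlt | hge
      · -- q+1 ≤ r : interior
        intro h
        have hload : loadAt x (x (j q)) = 2 := A.hnorm q h0 hq
        have hij : i q ≠ j q := by
          intro he
          exact A.hjP q h0 (by omega) (he ▸ A.hiP q hq)
        have hmem := mem_of_load_two hload (A.hsame q h0 hq) rfl hij h.symm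
        rcases hmem with h' | h'
        · exact A.hjP (q+1) (by omega) (by omega) (by rw [h']; exact A.hiP q hq)
        · exact absurd (A.hinjj (q+1) q (by omega) (by omega) h0 (by omega) h') (by omega)
      · -- q = r : slot of j (r+1) has load ≥ 3
        have hq' : q = r := by omega
        subst hq'
        intro h
        have h3 := A.hthree
        rw [← h] at h3
        have h2 := A.hnorm q h0 hq
        omega
  unfold gp
  omega

lemma Aug.sum_ge (A : Aug prec P x r i j) :
    r + 1 ≤ ∑ q ∈ range (r + 1), gp (x (i q)) (x (j (q + 1))) := by
  calc r + 1 = ∑ _q ∈ range (r + 1), 1 := by simp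
    _ ≤ _ := Finset.sum_le_sum (fun q hq => A.gap_pos q (by simpa using Nat.lt_succ_iff.mp (Finset.mem_range.mp hq)))

lemma Aug.meas_pos (A : Aug prec P x r i j) : 1 ≤ meas x r i j := by
  have := A.sum_ge
  unfold meas
  omega

end AugFacts

section Reflect

variable {n : ℕ} {z : ι → ℕ}

lemma loadAt_reflect {τ : ℕ} (hms : ∀ u, z u + 1 ≤ n) (hτ : τ < n) :
    loadAt (fun w => n - 1 - z w) τ = loadAt z (n - 1 - τ) := by
  unfold loadAt
  congr 1
  apply Finset.filter_congr
  intro v _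
  have := hms v
  show n - 1 - z v = τ ↔ z v = n - 1 - τ
  constructor <;> intro h <;> omega

lemma loadAt_reflect_pt (hms : ∀ u, z u + 1 ≤ n) (w : ι) :
    loadAt (fun v => n - 1 - z v) (n - 1 - z w) = loadAt z (z w) := by
  unfold loadAt
  congr 1
  apply Finset.filter_congr
  intro v _
  have := hms v
  have := hms w
  show n - 1 - z v = n - 1 - z w ↔ z v = z w
  constructor <;> intro h <;> omega

lemma Fobj_reflect (hms : ∀ u, z u + 1 ≤ n) :
    Fobj 2 n (fun w => n - 1 - z w) = Fobj 2 n z := by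
  unfold Fobj
  rw [← Finset.sum_range_reflect (fun τ => min 2 (loadAt z τ)) n]
  apply Finset.sum_congr rfl
  intro τ hτ
  rw [Finset.mem_range] at hτ
  rw [loadAt_reflect hms hτ]

end Reflect

section Main

/-- The conclusion of the main lemma. -/
def Concl (prec : ι → ι → Prop) (P : List ι) (x : ι → ℕ) : Prop :=
  ∃ x' : ι → ℕ, (∀ u v, prec u v → x' u + 1 ≤ x' v) ∧ (∀ u, x' u + 1 ≤ P.length) ∧
    Fobj 2 P.length x' = Fobj 2 P.length x + 1

lemma core {μ : ℕ}
    (IH : ∀ (prec : ι → ι → Prop), Transitive prec → (∀ u, ¬ prec u u) →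
      ∀ (P : List ι), P.Chain' prec → ∀ (x : ι → ℕ) (r : ℕ) (i j : ℕ → ι),
      Aug prec P x r i j → meas x r i j ≤ μ → Concl prec P x)
    (prec : ι → ι → Prop) (htrans : Transitive prec) (hirr : ∀ u, ¬ prec u u)
    (P : List ι) (hchain : P.Chain' prec) (x : ι → ℕ) (r : ℕ) (i j : ℕ → ι)

    (A : Aug prec P x r i j) (hm : meas x r i j ≤ μ + 1)
    (hab : x (i 0) < x (j 1)) : Concl prec P x := by
  classical
  have hpw := pairwise_of_chain htrans hchain
  have hms := A.hms
  have hfeas := A.hfeas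
  have hxn : ∀ w, x w < P.length := fun w => by have := hms w; omega
  -- the set of "blockers" of the move of `j 1` to the slot of `i 0`
  set U : Finset ι := univ.filter (fun u => prec u (j 1) ∧ x (i 0) ≤ x u) with hU
  have hUmem : ∀ u ∈ U, prec u (j 1) ∧ x (i 0) ≤ x u := by
    intro u hu; rw [hU, Finset.mem_filter] at hu; exact hu.2
  have hUlt : ∀ u ∈ U, x (i 0) < x u := by
    intro u hu
    rcases Nat.lt_or_ge (x (i 0)) (x u) with h | h
    · exact h
    · have hx : x u = x (i 0) := by have := (hUmem u hu).2; omega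
      have := A.halone u hx
      exact absurd (this ▸ (hUmem u hu).1) (A.h1 0 (Nat.zero_le _)).2.1
  have hUnP : ∀ u ∈ U, u ∉ P := by
    intro u hu humem
    have hi0 : i 0 = P.get ⟨x (i 0), hxn _⟩ :=
      eq_get_of_mem hfeas hms hpw (A.hiP 0 (Nat.zero_le _)) rfl (hxn _)
    have hueq : u = P.get ⟨x u, hxn _⟩ := eq_get_of_mem hfeas hms hpw humem rfl (hxn _)
    have hprec : prec (i 0) u := by
      rw [hi0, hueq]
      exact prec_get hpw (hUlt u hu) (hxn _)
    exact (A.h1 0 (Nat.zero_le _)).2.1 (htrans hprec (hUmem u hu).1)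
  have hUb : ∀ u ∈ U, x u < x (j 1) := fun u hu => by
    have := hfeas u (j 1) (hUmem u hu).1; omega
  by_cases hUe : U = ∅
  · -- no blockers: move `j 1` to the slot of `i 0`
    have hpred : ∀ u, prec u (j 1) → x u + 1 ≤ x (i 0) := by
      intro u hu
      by_contra hcon
      have : u ∈ U := by
        rw [hU, Finset.mem_filter]
        exact ⟨Finset.mem_univ _, hu, by omega⟩
      rw [hUe] at this
      exact absurd this (Finset.notMem_empty _)
    have hsucc : ∀ v, prec (j 1) v → x (i 0) + 1 ≤ x v := by
      intro v hv
      have := hfeas _ _ hv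
      omega
    have feas₁ := feas_update hirr hfeas hpred hsucc
    have ms₁ := ms_update (w := j 1) (s := x (i 0)) hms (hms (i 0))
    have hnej : x (j 1) ≠ x (i 0) := Ne.symm A.slot_ne
    rcases Nat.eq_zero_or_pos r with hr0 | hrpos
    · -- r = 0 : done, Fobj increases by exactly one
      refine ⟨Function.update x (j 1) (x (i 0)), feas₁, ms₁, ?_⟩
      apply Fobj_move_succ (hxn _) (hxn _) hnej ?_ A.load_a
      have := A.hthree
      rw [hr0] at this
      norm_num at this
      exact this
    · -- r ≥ 1 : slot of `i 1` becomes the new singleton slot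
      obtain ⟨rr, hrr⟩ : ∃ rr, r = rr + 1 := ⟨r - 1, by omega⟩
      set x₁ := Function.update x (j 1) (x (i 0)) with hx₁
      have hx₁ne : ∀ w, w ≠ j 1 → x₁ w = x w := fun w hw => Function.update_of_ne hw _ _
      have hx₁j : x₁ (j 1) = x (i 0) := Function.update_self _ _ _
      have hiNe : ∀ q, q ≤ r → i q ≠ j 1 := by
        intro q hq he
        exact A.hjP 1 le_rfl (by omega) (he ▸ A.hiP q hq)
      have hjNe : ∀ q, 2 ≤ q → q ≤ r + 1 → j q ≠ j 1 := by
        intro q h2 hq he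
        have := A.hinjj q 1 (by omega) hq le_rfl (by omega) he
        omega
      have hload2 : loadAt x (x (j 1)) = 2 := A.hnorm 1 le_rfl hrpos
      have hij1 : i 1 ≠ j 1 := hiNe 1 (by omega)
      have hsame1 : x (i 1) = x (j 1) := A.hsame 1 le_rfl hrpos
      have A₁ : Aug prec P x₁ rr (fun q => i (q + 1)) (fun q => j (q + 1)) := by
        refine ⟨feas₁, ms₁, ?_, ?_, ?_, ?_, ?_, ?_, ?_, ?_, ?_⟩
        · exact fun q hq => A.hiP (q + 1) (by omega)
        · exact fun q h1 h2 => A.hjP (q + 1) (by omega) (by omega)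
        · intro q q' a1 a2 a3 a4 he
          have := A.hinjj (q + 1) (q' + 1) (by omega) (by omega) (by omega) (by omega) he
          omega
        · exact fun q hq => A.h1 (q + 1) (by omega)
        · exact fun q h1 h2 => A.h2 (q + 1) (by omega) (by omega)
        · intro q h1 h2
          rw [hx₁ne _ (hiNe (q + 1) (by omega)), hx₁ne _ (hjNe (q + 1) (by omega) (by omega))]
          exact A.hsame (q + 1) (by omega) (by omega)
        · -- halone at slot of i 1
          intro w hw
          rw [hx₁ne _ hij1] at hw
          by_cases hwj : w = j 1
          · exfalso
            rw [hwj, hx₁j] at hw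
            exact A.slot_ne (hw.trans hsame1)
          · rw [hx₁ne _ hwj] at hw
            rw [hsame1] at hw
            rcases mem_of_load_two hload2 hsame1 rfl hij1 hw with h' | h'
            · exact h'
            · exact absurd h' hwj
        · -- hthree
          have hjr : j (rr + 1 + 1) = j (r + 1) := by rw [hrr]
          rw [hjr, hx₁ne _ (hjNe (r + 1) (by omega) (by omega))]
          have hb_ne_a : x (j (r + 1)) ≠ x (i 0) := by
            intro he
            have h3 := A.hthree
            have h1 := A.load_a
            rw [he] at h3
            omega
          have hb_ne_b1 : x (j (r + 1)) ≠ x (j 1) := by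
            intro he
            have h3 := A.hthree
            rw [he] at h3
            omega
          rw [loadAt_update_other hb_ne_a hb_ne_b1]
          exact A.hthree
        · -- hnorm
          intro q h1 h2
          rw [hx₁ne _ (hjNe (q + 1) (by omega) (by omega))]
          have hq1r : 1 ≤ q + 1 ∧ q + 1 ≤ r := ⟨by omega, by omega⟩
          have hload : loadAt x (x (j (q + 1))) = 2 := A.hnorm (q + 1) hq1r.1 hq1r.2
          have hne_a : x (j (q + 1)) ≠ x (i 0) := by
            intro he
            have := A.load_a
            rw [he] at hload
            omega
          have hne_b1 : x (j (q + 1)) ≠ x (j 1) := by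
            intro he
            rcases mem_of_load_two hload2 hsame1 rfl hij1 he with h' | h'
            · exact A.hjP (q + 1) (by omega) (by omega) (by rw [h']; exact A.hiP 1 (by omega))
            · exact hjNe (q + 1) (by omega) (by omega) h'
          rw [loadAt_update_other hne_a hne_b1]
          exact hload
      -- measure decreases
      have hmeas1 : meas x₁ rr (fun q => i (q + 1)) (fun q => j (q + 1)) ≤ μ := by
        have hS : ∑ q ∈ range (r + 1), gp (x (i q)) (x (j (q + 1)))
            = (∑ q ∈ range (rr + 1), gp (x (i (q + 1))) (x (j (q + 1 + 1)))) +
              gp (x (i 0)) (x (j 1)) := by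
          rw [hrr]
          exact Finset.sum_range_succ' _ _
        have hS' : ∑ q ∈ range (rr + 1), gp (x₁ (i (q + 1))) (x₁ (j (q + 1 + 1)))
            = ∑ q ∈ range (rr + 1), gp (x (i (q + 1))) (x (j (q + 1 + 1))) := by
          apply Finset.sum_congr rfl
          intro q hq
          rw [Finset.mem_range] at hq
          rw [hx₁ne _ (hiNe (q + 1) (by omega)), hx₁ne _ (hjNe (q + 2) (by omega) (by omega))]
        have hgap0 : 1 ≤ gp (x (i 0)) (x (j 1)) := A.gap_pos 0 (Nat.zero_le _)
        have hsum_ge := A₁.sum_ge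
        have hsum_ge' := A.sum_ge
        unfold meas at hm ⊢
        rw [hS'] at hsum_ge ⊢
        rw [hS] at hm hsum_ge'
        omega
      obtain ⟨x', f', m', F'⟩ := IH prec htrans hirr P hchain x₁ rr _ _ A₁ hmeas1
      have hFeq : Fobj 2 P.length x₁ = Fobj 2 P.length x :=
        Fobj_move_eq (hxn _) (hxn _) hnej hload2 A.load_a
      exact ⟨x', f', m', by rw [F', hFeq]⟩
  · -- there are blockers
    obtain ⟨u, huU, humax⟩ := Finset.exists_max_image U x (Finset.nonempty_of_ne_empty hUe)
    have huj1 : prec u (j 1) := (hUmem u huU).1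
    have hau : x (i 0) < x u := hUlt u huU
    have hunP : u ∉ P := hUnP u huU
    have hub : x u < x (j 1) := hUb u huU
    set pσ := P.get ⟨x u, hxn u⟩ with hpσ
    have hxpσ : x pσ = x u := x_get hfeas hms hpw (hxn u)
    have hpσP : pσ ∈ P := List.get_mem _ _
    have hpσu : pσ ≠ u := fun h => hunP (h ▸ hpσP)
    have hi0P : i 0 ∈ P := A.hiP 0 (Nat.zero_le _)
    have indep₀ : IndepJobs prec (i 0) u := by
      refine ⟨fun h => hunP (h ▸ hi0P), fun h => ?_, fun h => ?_⟩
      · exact (A.h1 0 (Nat.zero_le _)).2.1 (htrans h huj1)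
      · have := hfeas _ _ h; omega
    by_cases hju : ∃ q, 2 ≤ q ∧ q ≤ r + 1 ∧ j q = u
    · -- the maximal blocker is one of the path jobs: shortcut the path
      obtain ⟨q, hq2, hqr, hjqu⟩ := hju
      set s := q - 1 with hs
      have hs1 : 1 ≤ s := by omega
      have hsr : s ≤ r := by omega
      set r' := r - s with hr'
      have A' : Aug prec P x r' (fun m => if m = 0 then i 0 else i (m + s))
          (fun m => j (m + s)) := by
        refine ⟨hfeas, hms, ?_, ?_, ?_, ?_, ?_, ?_, ?_, ?_, ?_⟩
        · intro m hmr
          by_cases h0 : m = 0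
          · simp only [h0, if_pos rfl]; exact A.hiP 0 (Nat.zero_le _)
          · simp only [if_neg h0]; exact A.hiP (m + s) (by omega)
        · intro m h1 h2
          exact A.hjP (m + s) (by omega) (by omega)
        · intro m m' a1 a2 a3 a4 he
          have := A.hinjj (m + s) (m' + s) (by omega) (by omega) (by omega) (by omega) he
          omega
        · intro m hmr
          by_cases h0 : m = 0
          · subst h0
            simp only [if_pos rfl]
            have e : 0 + 1 + s = q := by omega
            rw [e, hjqu]
            exact indep₀
          · simp only [if_neg h0]
            have e : m + 1 + s = (m + s) + 1 := by omega
            rw [e]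
            exact A.h1 (m + s) (by omega)
        · intro m h1 h2
          simp only [if_neg (by omega : ¬ m = 0)]
          exact A.h2 (m + s) (by omega) (by omega)
        · intro m h1 h2
          simp only [if_neg (by omega : ¬ m = 0)]
          exact A.hsame (m + s) (by omega) (by omega)
        · intro w hw
          simp only [if_pos rfl] at hw ⊢
          exact A.halone w hw
        · have e : r' + 1 + s = r + 1 := by omega
          rw [e]
          exact A.hthree
        · intro m h1 h2
          exact A.hnorm (m + s) (by omega) (by omega)
      have hmeas' : meas x r' (fun m => if m = 0 then i 0 else i (m + s)) (fun m => j (m + s)) ≤ μ := by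
        set f : ℕ → ℕ := fun m => gp (x (i m)) (x (j (m + 1))) with hf
        have hf0 : f 0 = gp (x (i 0)) (x (j 1)) := by rw [hf]
        have hsplit : ∑ m ∈ range (r + 1), f m
            = (∑ m ∈ range (s + 1), f m) + ∑ m ∈ range r', f (s + 1 + m) := by
          have h1 : r + 1 = (s + 1) + r' := by omega
          rw [h1, Finset.sum_range_add]
        have hhead_ge : f 0 + s ≤ ∑ m ∈ range (s + 1), f m := by
          have h0 : ∀ m ∈ range s, 1 ≤ f (m + 1) := by
            intro m hmem
            rw [Finset.mem_range] at hmem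
            exact A.gap_pos (m + 1) (by omega)
          have h2 : s ≤ ∑ m ∈ range s, f (m + 1) := by
            calc s = ∑ _m ∈ range s, 1 := by simp
              _ ≤ _ := Finset.sum_le_sum h0
          have h3 := Finset.sum_range_succ' f s
          omega
        have hnew : ∑ m ∈ range (r' + 1),
            gp (x (if m = 0 then i 0 else i (m + s))) (x (j (m + 1 + s)))
            = gp (x (i 0)) (x u) + ∑ m ∈ range r', f (s + 1 + m) := by
          rw [Finset.sum_range_succ' (fun m =>
            gp (x (if m = 0 then i 0 else i (m + s))) (x (j (m + 1 + s)))) r']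
          have hg0 : gp (x (if (0:ℕ) = 0 then i 0 else i (0 + s))) (x (j (0 + 1 + s)))
              = gp (x (i 0)) (x u) := by
            have e : 0 + 1 + s = q := by omega
            rw [if_pos rfl, e, hjqu]
          have hterm : ∀ m ∈ range r',
              gp (x (if m + 1 = 0 then i 0 else i (m + 1 + s))) (x (j (m + 1 + 1 + s)))
              = f (s + 1 + m) := by
            intro m _
            rw [if_neg (Nat.succ_ne_zero m), hf]
            have e1 : m + 1 + s = s + 1 + m := by omega
            have e2 : m + 1 + 1 + s = s + 1 + m + 1 := by omega
            rw [e1, e2]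
          rw [Finset.sum_congr rfl hterm, hg0]
          ring
        have hgap : gp (x (i 0)) (x u) + 1 ≤ f 0 := by
          rw [hf0]
          unfold gp
          omega
        have hmeq : meas x r i j = 2 * (∑ m ∈ range (r + 1), f m) - r := by
          unfold meas
          rw [hf]
        have hm' : 2 * ((∑ m ∈ range (s + 1), f m) + ∑ m ∈ range r', f (s + 1 + m)) - r
            ≤ μ + 1 := by
          rw [← hsplit, ← hmeq]; exact hm
        have hS'_ge := A'.sum_ge
        rw [hnew] at hS'_ge
        have hmeq' : meas x r' (fun m => if m = 0 then i 0 else i (m + s)) (fun m => j (m + s))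
            = 2 * (∑ m ∈ range (r' + 1),
              gp (x (if m = 0 then i 0 else i (m + s))) (x (j (m + 1 + s)))) - r' := rfl
        rw [hmeq', hnew]
        omega
      obtain ⟨x', f', m', F'⟩ := IH prec htrans hirr P hchain x r' _ _ A' hmeas'
      exact ⟨x', f', m', F'⟩
    · -- the maximal blocker is a fresh job
      have hload2 : 2 ≤ loadAt x (x u) := le_loadAt_of_two hxpσ rfl hpσu
      by_cases hheavy : 3 ≤ loadAt x (x u)
      · -- its slot is heavy: restart with the short path (i 0, u)
        have A' : Aug prec P x 0 (fun _ => i 0) (fun _ => u) := by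
          refine ⟨hfeas, hms, ?_, ?_, ?_, ?_, ?_, ?_, ?_, ?_, ?_⟩
          · exact fun q _ => hi0P
          · exact fun q _ _ => hunP
          · intro q q' a1 a2 a3 a4 _; omega
          · exact fun q _ => indep₀
          · intro q h1 h2; omega
          · intro q h1 h2; omega
          · exact A.halone
          · exact hheavy
          · intro q h1 h2; omega
        have hmeas' : meas x 0 (fun _ => i 0) (fun _ => u) ≤ μ := by
          set f : ℕ → ℕ := fun m => gp (x (i m)) (x (j (m + 1))) with hf
          have hsplit : ∑ m ∈ range (r + 1), f m = (∑ m ∈ range r, f (m + 1)) + f 0 :=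
            Finset.sum_range_succ' _ _
          have htail : r ≤ ∑ m ∈ range r, f (m + 1) := by
            have : ∀ m ∈ range r, 1 ≤ f (m + 1) := by
              intro m hmem
              rw [Finset.mem_range] at hmem
              exact A.gap_pos (m + 1) (by omega)
            calc r = ∑ _m ∈ range r, 1 := by simp
              _ ≤ _ := Finset.sum_le_sum this
          have hf0 : f 0 = gp (x (i 0)) (x (j 1)) := by rw [hf]
          have hgap : gp (x (i 0)) (x u) + 1 ≤ f 0 := by
            rw [hf0]
            unfold gp
            omega
          have hmeq : meas x r i j = 2 * (∑ m ∈ range (r + 1), f m) - r := by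
            unfold meas
            rw [hf]
          have hm' : 2 * ((∑ m ∈ range r, f (m + 1)) + f 0) - r ≤ μ + 1 := by
            rw [← hsplit, ← hmeq]; exact hm
          have hmeq' : meas x 0 (fun _ => i 0) (fun _ => u)
              = 2 * (∑ _m ∈ range (0 + 1), gp (x (i 0)) (x u)) - 0 := rfl
          rw [hmeq', Finset.sum_range_one]
          omega
        obtain ⟨x', f', m', F'⟩ := IH prec htrans hirr P hchain x 0 _ _ A' hmeas'
        exact ⟨x', f', m', F'⟩
      · -- its slot has load exactly 2: extend the path through (u, pσ)
        have hload : loadAt x (x u) = 2 := by omega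
        have hpσj1 : IndepJobs prec pσ (j 1) := by
          refine ⟨fun h => A.hjP 1 le_rfl (by omega) (h ▸ hpσP), fun h => ?_, fun h => ?_⟩
          · have : pσ ∈ U := by
              rw [hU, Finset.mem_filter]
              exact ⟨Finset.mem_univ _, h, by omega⟩
            exact hUnP pσ this hpσP
          · have := hfeas _ _ h; omega
        have hupσ : IndepJobs prec u pσ := by
          refine ⟨Ne.symm hpσu, fun h => ?_, fun h => ?_⟩
          · have := hfeas _ _ h; omega
          · have := hfeas _ _ h; omega
        have hjneu : ∀ m, 1 ≤ m → m ≤ r + 1 → j m ≠ u := by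
          intro m h1 h2 he
          rcases Nat.eq_or_lt_of_le h1 with h | h
          · rw [← h] at he
            exact hirr (j 1) (he ▸ huj1)
          · exact hju ⟨m, by omega, h2, he⟩
        have A' : Aug prec P x (r + 1)
            (fun m => if m = 0 then i 0 else if m = 1 then pσ else i (m - 1))
            (fun m => if m ≤ 1 then u else j (m - 1)) := by
          refine ⟨hfeas, hms, ?_, ?_, ?_, ?_, ?_, ?_, ?_, ?_, ?_⟩
          · intro m hmr
            by_cases h0 : m = 0
            · simp only [h0, if_pos rfl]; exact hi0P
            · by_cases h1 : m = 1
              · simp only [h1, if_neg (by omega : ¬ (1:ℕ) = 0), if_pos rfl]; exact hpσP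
              · simp only [if_neg h0, if_neg h1]; exact A.hiP (m - 1) (by omega)
          · intro m h1m h2m
            by_cases h1 : m ≤ 1
            · simp only [if_pos h1]; exact hunP
            · simp only [if_neg h1]; exact A.hjP (m - 1) (by omega) (by omega)
          · intro m m' a1 a2 a3 a4 he
            by_cases h1 : m ≤ 1 <;> by_cases h1' : m' ≤ 1
            · omega
            · simp only [if_pos h1, if_neg h1'] at he
              exact absurd he.symm (hjneu (m' - 1) (by omega) (by omega))
            · simp only [if_neg h1, if_pos h1'] at he
              exact absurd he (hjneu (m - 1) (by omega) (by omega))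
            · simp only [if_neg h1, if_neg h1'] at he
              have := A.hinjj (m - 1) (m' - 1) (by omega) (by omega) (by omega) (by omega) he
              omega
          · intro m hmr
            by_cases h0 : m = 0
            · simp only [h0, if_pos rfl, if_pos (by omega : (0:ℕ) + 1 ≤ 1)]
              exact indep₀
            · by_cases h1 : m = 1
              · simp only [h1, if_neg (by omega : ¬ (1:ℕ) = 0), if_pos rfl,
                  if_neg (by omega : ¬ (1:ℕ) + 1 ≤ 1)]
                show IndepJobs prec pσ (j (1 + 1 - 1))
                norm_num
                exact hpσj1
              · simp only [if_neg h0, if_neg h1, if_neg (by omega : ¬ m + 1 ≤ 1)]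
                have e : m + 1 - 1 = (m - 1) + 1 := by omega
                rw [e]
                exact A.h1 (m - 1) (by omega)
          · intro m h1m h2m
            by_cases h1 : m = 1
            · simp only [h1, if_pos le_rfl, if_neg (by omega : ¬ (1:ℕ) = 0), if_pos rfl]
              exact hupσ
            · simp only [if_neg (by omega : ¬ m ≤ 1), if_neg (by omega : ¬ m = 0), if_neg h1]
              exact A.h2 (m - 1) (by omega) (by omega)
          · intro m h1m h2m
            by_cases h1 : m = 1
            · simp only [h1, if_pos le_rfl, if_neg (by omega : ¬ (1:ℕ) = 0), if_pos rfl]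
              exact hxpσ
            · simp only [if_neg (by omega : ¬ m ≤ 1), if_neg (by omega : ¬ m = 0), if_neg h1]
              exact A.hsame (m - 1) (by omega) (by omega)
          · intro w hw
            simp only [if_pos rfl] at hw ⊢
            exact A.halone w hw
          · simp only [if_neg (by omega : ¬ r + 1 + 1 ≤ 1)]
            have e : r + 1 + 1 - 1 = r + 1 := by omega
            rw [e]
            exact A.hthree
          · intro m h1m h2m
            by_cases h1 : m = 1
            · simp only [h1, if_pos le_rfl]
              exact hload
            · simp only [if_neg (by omega : ¬ m ≤ 1)]
              exact A.hnorm (m - 1) (by omega) (by omega)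
        have hmeas' : meas x (r + 1)
            (fun m => if m = 0 then i 0 else if m = 1 then pσ else i (m - 1))
            (fun m => if m ≤ 1 then u else j (m - 1)) ≤ μ := by
          set f : ℕ → ℕ := fun m => gp (x (i m)) (x (j (m + 1))) with hf
          have hf0 : f 0 = gp (x (i 0)) (x (j 1)) := by rw [hf]
          set g : ℕ → ℕ := fun m =>
            gp (x (if m = 0 then i 0 else if m = 1 then pσ else i (m - 1)))
              (x (if m + 1 ≤ 1 then u else j (m + 1 - 1))) with hg
          have hsplitS : ∑ m ∈ range (r + 1), f m = (∑ m ∈ range r, f (m + 1)) + f 0 :=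
            Finset.sum_range_succ' _ _
          have hsplitg : ∑ m ∈ range (r + 1 + 1), g m
              = ((∑ m ∈ range r, g (m + 1 + 1)) + g 1) + g 0 := by
            rw [Finset.sum_range_succ' g (r + 1), Finset.sum_range_succ' (fun m => g (m + 1)) r]
          have hg0 : g 0 = gp (x (i 0)) (x u) := by
            rw [hg]
            norm_num
          have hg1 : g 1 = gp (x u) (x (j 1)) := by
            rw [hg]
            norm_num [hxpσ]
          have hterm : ∀ m ∈ range r, g (m + 1 + 1) = f (m + 1) := by
            intro m _
            rw [hg, hf]
            beta_reduce
            rw [if_neg (by omega : ¬ m + 1 + 1 = 0), if_neg (by omega : ¬ m + 1 + 1 = 1),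
              if_neg (by omega : ¬ m + 1 + 1 + 1 ≤ 1)]
            have e1 : m + 1 + 1 - 1 = m + 1 := by omega
            have e2 : m + 1 + 1 + 1 - 1 = m + 1 + 1 := by omega
            rw [e1, e2]
          have hgapsplit : gp (x (i 0)) (x u) + gp (x u) (x (j 1)) = f 0 := by
            rw [hf0]
            unfold gp
            omega
          have hmeq : meas x r i j = 2 * (∑ m ∈ range (r + 1), f m) - r := by
            unfold meas
            rw [hf]
          have hm' : 2 * ((∑ m ∈ range r, f (m + 1)) + f 0) - r ≤ μ + 1 := by
            rw [← hsplitS, ← hmeq]; exact hm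
          have hS_ge : r + 1 ≤ (∑ m ∈ range r, f (m + 1)) + f 0 := by
            rw [← hsplitS, ← hf]; exact A.sum_ge
          have hmeq' : meas x (r + 1)
              (fun m => if m = 0 then i 0 else if m = 1 then pσ else i (m - 1))
              (fun m => if m ≤ 1 then u else j (m - 1))
              = 2 * (∑ m ∈ range (r + 1 + 1), g m) - (r + 1) := by
            rw [hg]
            rfl
          rw [hmeq', hsplitg, Finset.sum_congr rfl hterm, hg0, hg1]
          omega
        obtain ⟨x', f', m', F'⟩ := IH prec htrans hirr P hchain x (r + 1) _ _ A' hmeas'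
        exact ⟨x', f', m', F'⟩

theorem key : ∀ (μ : ℕ) (prec : ι → ι → Prop), Transitive prec → (∀ u, ¬ prec u u) →
    ∀ (P : List ι), P.Chain' prec → ∀ (x : ι → ℕ) (r : ℕ) (i j : ℕ → ι),
    Aug prec P x r i j → meas x r i j ≤ μ → Concl prec P x := by
  intro μ
  induction μ with
  | zero =>
    intro prec _ _ P _ x r i j A hm
    exact absurd hm (by have := A.meas_pos; omega)
  | succ μ IH =>
    intro prec htrans hirr P hchain x r i j A hm
    rcases Nat.lt_or_ge (x (i 0)) (x (j 1)) with hab | hge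
    · exact core IH prec htrans hirr P hchain x r i j A hm hab
    · have hslot := A.slot_ne
      have hab' : x (j 1) < x (i 0) := by omega
      have hn : 1 ≤ P.length := by have := A.hms (i 0); omega
      have hbd : ∀ w, x w ≤ P.length - 1 := fun w => by have := A.hms w; omega
      set n := P.length with hnn
      set y : ι → ℕ := fun w => n - 1 - x w with hy
      set prec' : ι → ι → Prop := fun u v => prec v u with hprec'
      have htrans' : Transitive prec' := fun a b c h1 h2 => htrans h2 h1
      have hirr' : ∀ u, ¬ prec' u u := fun u h => hirr u h
      have hchain' : P.reverse.Chain' prec' := List.isChain_reverse.mpr hchain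
      have hrevlen : P.reverse.length = n := by simp [hnn]
      have hmsy : ∀ u, y u + 1 ≤ P.reverse.length := by
        intro u; rw [hrevlen]; simp only [hy]; omega
      have hloadpt : ∀ w, loadAt y (y w) = loadAt x (x w) := by
        intro w
        simp only [hy]
        exact loadAt_reflect_pt (fun u => A.hms u) w
      have A' : Aug prec' P.reverse y r i j := by
        refine ⟨?_, hmsy, ?_, ?_, A.hinjj, ?_, ?_, ?_, ?_, ?_, ?_⟩
        · intro u v huv
          have := A.hfeas v u huv
          have := hbd u
          simp only [hy]
          omega
        · exact fun q hq => List.mem_reverse.mpr (A.hiP q hq)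
        · exact fun q h1 h2 hmem => A.hjP q h1 h2 (List.mem_reverse.mp hmem)
        · exact fun q hq => ⟨(A.h1 q hq).1, (A.h1 q hq).2.2, (A.h1 q hq).2.1⟩
        · exact fun q h1 h2 => ⟨(A.h2 q h1 h2).1, (A.h2 q h1 h2).2.2, (A.h2 q h1 h2).2.1⟩
        · intro q h1 h2; simp only [hy, A.hsame q h1 h2]
        · intro w hw
          apply A.halone
          have h1 := hbd w
          have h2 := hbd (i 0)
          simp only [hy] at hw
          omega
        · rw [hloadpt]; exact A.hthree
        · intro q h1 h2; rw [hloadpt]; exact A.hnorm q h1 h2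
      have hmeasr : meas y r i j = meas x r i j := by
        unfold meas
        congr 1
        congr 1
        apply Finset.sum_congr rfl
        intro q _
        have h1 := hbd (i q)
        have h2 := hbd (j (q + 1))
        simp only [hy]
        unfold gp
        omega
      have haby : y (i 0) < y (j 1) := by
        have h1 := hbd (i 0)
        simp only [hy]
        omega
      obtain ⟨z, fz, mz, Fz⟩ :=
        core IH prec' htrans' hirr' P.reverse hchain' y r i j A' (by rw [hmeasr]; exact hm) haby
      simp only [hrevlen] at mz Fz
      refine ⟨fun w => n - 1 - z w, ?_, ?_, ?_⟩
      · intro u v huv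
        have h0 := fz v u huv
        have h1 := mz u
        have h2 := mz v
        show n - 1 - z u + 1 ≤ n - 1 - z v
        omega
      · intro u
        show n - 1 - z u + 1 ≤ n
        have := mz u
        omega
      · have e1 : Fobj 2 n (fun w => n - 1 - z w) = Fobj 2 n z := Fobj_reflect mz
        have e2 : Fobj 2 n y = Fobj 2 n x := by
          simp only [hy]
          exact Fobj_reflect (fun u => A.hms u)
        rw [e1, Fz, e2]

end Main

end RL7

/-- Augmenting sequence lemma: if a schedule of makespan `|P|` admits an augmenting
sequence `(i₀, j₁, i₁, …, j_r, i_r, j_{r+1})` in the bipartite independence graph with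
`i₀` alone at its time step and at least three jobs at `x_{j_{r+1}}`, then some feasible
schedule `x'` of makespan `|P|` has `F(x') = F(x) + 1`. -/
theorem stmt7 {ι : Type*} [Fintype ι] [DecidableEq ι] (prec : ι → ι → Prop)
    (htrans : Transitive prec) (hirr : ∀ i, ¬ prec i i)
    (P : List ι) (hcrit : IsCriticalPath prec P)
    (x : ι → ℕ)
    (hfeas : ∀ i j, prec i j → x i + 1 ≤ x j)
    (hms : ∀ i, x i + 1 ≤ P.length)
    (r : ℕ)
    -- `i q` denotes `i_q` (for 0 ≤ q ≤ r) and `j q` denotes `j_q` (for 1 ≤ q ≤ r+1)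
    (i j : ℕ → ι)
    (hiP : ∀ q ≤ r, i q ∈ P)
    (hjP : ∀ q, 1 ≤ q → q ≤ r + 1 → j q ∉ P)
    (hinj_i : ∀ q ≤ r, ∀ q' ≤ r, i q = i q' → q = q')
    (hinj_j : ∀ q q', 1 ≤ q → q ≤ r + 1 → 1 ≤ q' → q' ≤ r + 1 → j q = j q' → q = q')
    (hij : ∀ q ≤ r, ∀ q', 1 ≤ q' → q' ≤ r + 1 → i q ≠ j q')
    (hpath₁ : ∀ q ≤ r, IndepJobs prec (i q) (j (q + 1)))
    (hpath₂ : ∀ q, 1 ≤ q → q ≤ r → IndepJobs prec (j q) (i q))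
    (halone : ∀ a, x a = x (i 0) → a = i 0)
    (hthree : 3 ≤ (univ.filter fun a => x a = x (j (r + 1))).card)
    (hsame : ∀ q, 1 ≤ q → q ≤ r → x (i q) = x (j q)) :
    ∃ x' : ι → ℕ, (∀ u v, prec u v → x' u + 1 ≤ x' v) ∧ (∀ i, x' i + 1 ≤ P.length) ∧
      Fobj 2 P.length x' = Fobj 2 P.length x + 1 := by
  classical
  have hchain : P.Chain' prec := hcrit.1
  have hthree' : 3 ≤ loadAt x (x (j (r + 1))) := hthree
  -- find the first index whose slot carries at least three jobs
  set Q : Finset ℕ := (Finset.range (r + 2)).filter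
    (fun q => 1 ≤ q ∧ 3 ≤ loadAt x (x (j q))) with hQ
  have hQne : r + 1 ∈ Q := by
    rw [hQ, Finset.mem_filter]
    exact ⟨Finset.mem_range.mpr (by omega), by omega, hthree'⟩
  have hQnon : Q.Nonempty := ⟨r + 1, hQne⟩
  set q₀ := Q.min' hQnon with hq₀
  have hq₀mem : q₀ ∈ Q := Q.min'_mem hQnon
  rw [hQ, Finset.mem_filter, Finset.mem_range] at hq₀mem
  have hq₀1 : 1 ≤ q₀ := hq₀mem.2.1
  have hq₀r : q₀ ≤ r + 1 := by omega
  have hq₀load : 3 ≤ loadAt x (x (j q₀)) := hq₀mem.2.2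
  have hq₀min : ∀ q, 1 ≤ q → q < q₀ → loadAt x (x (j q)) ≤ 2 := by
    intro q h1 h2
    by_contra hcon
    have hqQ : q ∈ Q := by
      rw [hQ, Finset.mem_filter, Finset.mem_range]
      exact ⟨by omega, h1, by omega⟩
    have := Q.min'_le q hqQ
    omega
  set r' := q₀ - 1 with hr'
  have hr'r : r' ≤ r := by omega
  have A : RL7.Aug prec P x r' i j := by
    refine ⟨hfeas, hms, ?_, ?_, ?_, ?_, ?_, ?_, halone, ?_, ?_⟩
    · exact fun q hq => hiP q (by omega)
    · exact fun q h1 h2 => hjP q h1 (by omega)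
    · exact fun q q' a b c d e => hinj_j q q' a (by omega) c (by omega) e
    · exact fun q hq => hpath₁ q (by omega)
    · exact fun q h1 h2 => hpath₂ q h1 (by omega)
    · exact fun q h1 h2 => hsame q h1 (by omega)
    · have e : r' + 1 = q₀ := by omega
      rw [e]
      exact hq₀load
    · intro q h1 h2
      have hub := hq₀min q h1 (by omega)
      have hlb : 2 ≤ loadAt x (x (j q)) :=
        RL7.le_loadAt_of_two (hsame q h1 (by omega)) rfl (hij q (by omega) q h1 (by omega))
      omega
  obtain ⟨x', h1, h2, h3⟩ :=
    RL7.key (RL7.meas x r' i j) prec htrans hirr P hchain x r' i j A le_rfl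
  exact ⟨x', h1, h2, h3⟩
end

section
/- Consider unit-time unit-consumption jobs whose precedence graph is an in-tree, with resource level L and deadline M at least the depth of the tree. The list algorithm that at each time step τ schedules the (up to) L available leaves with smallest latest starting times, plus all remaining jobs whose latest starting time equals τ, produces a feasible schedule x that maximizes F(x) = Σ_{τ=0}^{M−1} min(L, r_τ(x)). -/
open Finset

variable {ι : Type*}

/-- The set of jobs still unscheduled at the beginning of time step `τ`,
given the sets `S τ` of jobs scheduled at each time step. -/
def remainingSet [Fintype ι] [DecidableEq ι] (S : ℕ → Finset ι) : ℕ → Finset ι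
  | 0 => univ
  | τ + 1 => remainingSet S τ \ S τ

/-- The available leaves of the remaining precedence (in-tree) graph:
jobs with no remaining predecessor. -/
def leavesOf [DecidableEq ι] (prec : ι → ι → Prop) [DecidableRel prec]
    (R : Finset ι) : Finset ι :=
  R.filter fun i => ∀ j ∈ R, ¬ prec j i

/-- A run of the in-tree leveling list algorithm with level `L`, deadline `M`
and latest starting times `lst`: at each time step `τ < M`, the scheduled set `S τ`
consists of (up to) `L` available leaves with smallest latest starting times,
plus all remaining jobs whose latest starting time equals `τ`. -/
def IsAlgRun [Fintype ι] [DecidableEq ι] (prec : ι → ι → Prop) [DecidableRel prec]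
    (lst : ι → ℕ) (L M : ℕ) (S : ℕ → Finset ι) : Prop :=
  ∀ τ < M, ∃ A ⊆ leavesOf prec (remainingSet S τ),
    A.card = min L (leavesOf prec (remainingSet S τ)).card ∧
    (∀ a ∈ A, ∀ b ∈ leavesOf prec (remainingSet S τ), b ∉ A → lst a ≤ lst b) ∧
    S τ = A ∪ ((remainingSet S τ).filter fun i => lst i = τ)

section StmtAux

set_option linter.unusedSectionVars false

variable [Fintype ι] [DecidableEq ι] {prec : ι → ι → Prop} [DecidableRel prec]
  {lst : ι → ℕ} {L M : ℕ} {S : ℕ → Finset ι}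

lemma remaining_succ' (S : ℕ → Finset ι) (τ : ℕ) :
    remainingSet S (τ + 1) = remainingSet S τ \ S τ := rfl

lemma mem_leavesOf' {R : Finset ι} {i : ι} :
    i ∈ leavesOf prec R ↔ i ∈ R ∧ ∀ j ∈ R, ¬ prec j i := by
  simp [leavesOf]

lemma leavesOf_subset' (R : Finset ι) : leavesOf prec R ⊆ R :=
  fun _ hb => (mem_leavesOf'.mp hb).1

lemma exists_S_of_not_remaining' {i : ι} {τ : ℕ} (h : i ∉ remainingSet S τ) :
    ∃ σ < τ, i ∈ S σ := by
  induction τ with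
  | zero => exact absurd (mem_univ i) h
  | succ n ih =>
    rw [remaining_succ', mem_sdiff] at h
    push_neg at h
    by_cases hn : i ∈ remainingSet S n
    · exact ⟨n, Nat.lt_succ_self n, h hn⟩
    · obtain ⟨σ, hσ, hiS⟩ := ih hn
      exact ⟨σ, Nat.lt_succ_of_lt hσ, hiS⟩

lemma alg_invariant' (hrun : IsAlgRun prec lst L M S) :
    ∀ τ ≤ M, ∀ i ∈ remainingSet S τ, τ ≤ lst i := by
  intro τ
  induction τ with
  | zero => intro _ i _; exact Nat.zero_le _
  | succ n ih =>
    intro hτ i hi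
    have hn : n < M := hτ
    rw [remaining_succ', mem_sdiff] at hi
    have h1 : n ≤ lst i := ih (le_of_lt hn) i hi.1
    rcases Nat.lt_or_ge n (lst i) with h | h
    · omega
    · exfalso
      have hlst : lst i = n := by omega
      obtain ⟨A, hA, hAcard, hAmin, hAS⟩ := hrun n hn
      exact hi.2 (hAS ▸ mem_union_right A (mem_filter.mpr ⟨hi.1, hlst⟩))

/-- Key monotonicity: the number of remaining leaves with `lst ≤ t` does not increase. -/
lemma tleaves_mono' (hsucc : ∀ i j k, prec i j → prec i k → j = k)
    (hll : ∀ p j, prec p j → lst p ≤ lst j)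
    {σ : ℕ} (hSl : S σ ⊆ leavesOf prec (remainingSet S σ)) (t : ℕ) :
    ((leavesOf prec (remainingSet S (σ+1))).filter fun i => lst i ≤ t).card ≤
    ((leavesOf prec (remainingSet S σ)).filter fun i => lst i ≤ t).card := by
  classical
  apply Finset.card_le_card_of_injOn
    (fun j => if h : ∃ p ∈ S σ, prec p j then h.choose else j)
  · intro j hj
    rw [mem_coe] at hj ⊢
    rw [mem_filter] at hj
    obtain ⟨hjl, hjt⟩ := hj
    rw [mem_leavesOf'] at hjl
    obtain ⟨hjR1, hjleaf⟩ := hjl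
    rw [remaining_succ', mem_sdiff] at hjR1
    dsimp only
    split_ifs with h
    · obtain ⟨hp1, hp2⟩ := h.choose_spec
      rw [mem_filter]
      exact ⟨hSl hp1, le_trans (hll _ _ hp2) hjt⟩
    · rw [mem_filter, mem_leavesOf']
      refine ⟨⟨hjR1.1, fun k hk hpk => ?_⟩, hjt⟩
      by_cases hkS : k ∈ S σ
      · exact h ⟨k, hkS, hpk⟩
      · exact hjleaf k (by rw [remaining_succ', mem_sdiff]; exact ⟨hk, hkS⟩) hpk
  · intro a ha b hb hab
    have hnS : ∀ c ∈ (leavesOf prec (remainingSet S (σ+1))).filter fun i => lst i ≤ t,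
        c ∉ S σ := by
      intro c hc
      rw [mem_filter, mem_leavesOf', remaining_succ', mem_sdiff] at hc
      exact hc.1.1.2
    rw [mem_coe] at ha hb
    dsimp only at hab
    split_ifs at hab with h1 h2 h2
    · obtain ⟨hp1, hp2⟩ := h1.choose_spec
      obtain ⟨hq1, hq2⟩ := h2.choose_spec
      rw [hab] at hp2
      exact hsucc _ _ _ hp2 hq2
    · exact absurd (hab ▸ h1.choose_spec.1) (hnS b hb)
    · exact absurd (hab ▸ h2.choose_spec.1) (hnS a ha)
    · exact hab

end StmtAux

/-- The in-tree leveling list algorithm produces a feasible schedule maximizing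
`F(x) = Σ_{τ<M} min(L, r_τ(x))`.  Here `prec` is an in-tree precedence graph
(each job has at most one immediate successor), `depth i` is the length of the
(unique) path from `i` to its root, so `M - depth i` is the latest starting time,
and `M` is at least the depth of the tree. -/
theorem stmt8 {ι : Type*} [Fintype ι] [DecidableEq ι]
    (prec : ι → ι → Prop) [DecidableRel prec]
    (hsucc : ∀ i j k, prec i j → prec i k → j = k)
    (depth : ι → ℕ)
    (hdepth_leaf : ∀ i, (∀ j, ¬ prec i j) → depth i = 1)
    (hdepth_succ : ∀ i j, prec i j → depth i = depth j + 1)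
    (L M : ℕ) (hM : ∀ i, depth i ≤ M)
    (S : ℕ → Finset ι) (hrun : IsAlgRun prec (fun i => M - depth i) L M S)
    (x : ι → ℕ) (hx : ∀ i τ, x i = τ ↔ i ∈ S τ) :
    ((∀ i j, prec i j → x i + 1 ≤ x j) ∧ ∀ i, x i < M) ∧
    ∀ y : ι → ℕ, (∀ i j, prec i j → y i + 1 ≤ y j) → (∀ i, y i < M) →
      (∑ τ ∈ Finset.range M, min L ((univ.filter fun i => y i = τ).card)) ≤
      (∑ τ ∈ Finset.range M, min L ((univ.filter fun i => x i = τ).card)) := by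
  classical
  have hdpos : ∀ i, 1 ≤ depth i := by
    intro i
    by_cases h : ∃ j, prec i j
    · obtain ⟨j, hj⟩ := h
      rw [hdepth_succ i j hj]; omega
    · push_neg at h
      rw [hdepth_leaf i h]
  have hinv : ∀ τ ≤ M, ∀ i ∈ remainingSet S τ, τ ≤ M - depth i :=
    alg_invariant' hrun
  -- jobs whose lst equals τ are leaves of the remaining graph
  have hfl : ∀ τ < M, ∀ i ∈ remainingSet S τ, M - depth i = τ →
      i ∈ leavesOf prec (remainingSet S τ) := by
    intro τ hτ i hi hlsti
    rw [mem_leavesOf']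
    refine ⟨hi, fun k hk hpk => ?_⟩
    have h1 : τ ≤ M - depth k := hinv τ (le_of_lt hτ) k hk
    have h2 : depth k = depth i + 1 := hdepth_succ k i hpk
    have h3 : depth k ≤ M := hM k
    omega
  have hSl : ∀ τ < M, S τ ⊆ leavesOf prec (remainingSet S τ) := by
    intro τ hτ
    obtain ⟨A, hA, hAcard, hAmin, hAS⟩ := hrun τ hτ
    rw [hAS]
    intro i hi
    rcases mem_union.mp hi with h | h
    · exact hA h
    · rw [mem_filter] at h
      exact hfl τ hτ i h.1 h.2
  have hSR : ∀ τ < M, S τ ⊆ remainingSet S τ :=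
    fun τ h => (hSl τ h).trans (leavesOf_subset' _)
  have hxM : ∀ i, x i < M := by
    intro i
    by_contra hge
    push_neg at hge
    have hiR : i ∈ remainingSet S M := by
      by_contra hR
      obtain ⟨σ, hσ, hiS⟩ := exists_S_of_not_remaining' hR
      have := (hx i σ).mpr hiS
      omega
    have h1 := hinv M le_rfl i hiR
    have h2 := hM i
    have h3 := hdpos i
    omega
  have hxprec : ∀ i j, prec i j → x i + 1 ≤ x j := by
    intro i j hij
    have hjS : j ∈ S (x j) := (hx j (x j)).mp rfl
    have hjleaf := hSl (x j) (hxM j) hjS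
    rw [mem_leavesOf'] at hjleaf
    have hiR : i ∉ remainingSet S (x j) := fun h => hjleaf.2 i h hij
    obtain ⟨σ, hσ, hiS⟩ := exists_S_of_not_remaining' hiR
    have := (hx i σ).mpr hiS
    omega
  refine ⟨⟨hxprec, hxM⟩, ?_⟩
  intro y hyprec hyM
  have hxlst : ∀ i, x i ≤ M - depth i := fun i =>
    hinv (x i) (le_of_lt (hxM i)) i (hSR (x i) (hxM i) ((hx i (x i)).mp rfl))
  have hfx : ∀ σ, (univ.filter fun i => x i = σ) = S σ := by
    intro σ; ext i; simp [hx i σ]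
  have hylst : ∀ i, y i + depth i ≤ M := by
    have H : ∀ d i, depth i = d → y i + depth i ≤ M := by
      intro d
      induction d using Nat.strong_induction_on with
      | _ d ih =>
        intro i hd
        by_cases h : ∃ j, prec i j
        · obtain ⟨j, hj⟩ := h
          have h1 := hdepth_succ i j hj
          have h2 := ih (depth j) (by omega) j rfl
          have h3 := hyprec i j hj
          omega
        · push_neg at h
          have h1 := hdepth_leaf i h
          have h2 := hyM i
          omega
    exact fun i => H (depth i) i rfl
  by_cases hO : ∃ τ < M, L < (S τ).card
  · -- there is an overloaded step; τs is the last one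
    have hne : ((Finset.range M).filter fun τ => L < (S τ).card).Nonempty := by
      obtain ⟨τ, h1, h2⟩ := hO
      exact ⟨τ, mem_filter.mpr ⟨mem_range.mpr h1, h2⟩⟩
    obtain ⟨τs, hτsmem, hτsub⟩ :
        ∃ τs, τs ∈ ((Finset.range M).filter fun τ => L < (S τ).card) ∧
          ∀ σ ∈ ((Finset.range M).filter fun τ => L < (S τ).card), σ ≤ τs :=
      ⟨_, Finset.max'_mem _ hne, fun σ h => Finset.le_max' _ σ h⟩
    rw [mem_filter, mem_range] at hτsmem
    obtain ⟨hτsM, hτsL⟩ := hτsmem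
    have hmax : ∀ σ, τs < σ → σ < M → (S σ).card ≤ L := by
      intro σ h1 h2
      by_contra h
      push_neg at h
      have hmem : σ ∈ (Finset.range M).filter fun τ => L < (S τ).card :=
        mem_filter.mpr ⟨mem_range.mpr h2, h⟩
      have := hτsub σ hmem
      omega
    -- the last overloaded step contains a forced leaf with lst = τs outside A,
    -- hence all jobs scheduled at τs are leaves with lst ≤ τs
    have hT : L < ((leavesOf prec (remainingSet S τs)).filter
        fun i => M - depth i ≤ τs).card := by
      obtain ⟨A, hA, hAcard, hAmin, hAS⟩ := hrun τs hτsM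
      have hAle : A.card ≤ L := by rw [hAcard]; exact min_le_left _ _
      have hASub : A ⊆ S τs := hAS ▸ Finset.subset_union_left
      have hj : ∃ j ∈ S τs, j ∉ A := by
        by_contra h
        push_neg at h
        have := Finset.card_le_card h
        omega
      obtain ⟨j, hjS, hjA⟩ := hj
      have hjfilter : j ∈ (remainingSet S τs).filter fun i => M - depth i = τs := by
        rw [hAS] at hjS
        rcases mem_union.mp hjS with h | h
        · exact absurd h hjA
        · exact h
      rw [mem_filter] at hjfilter
      have hjleaf : j ∈ leavesOf prec (remainingSet S τs) :=
        hfl τs hτsM j hjfilter.1 hjfilter.2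
      have hSsub : S τs ⊆ (leavesOf prec (remainingSet S τs)).filter
          fun i => M - depth i ≤ τs := by
        intro i hiS
        rw [mem_filter]
        refine ⟨hSl τs hτsM hiS, ?_⟩
        rw [hAS] at hiS
        rcases mem_union.mp hiS with h | h
        · have h1 : M - depth i ≤ M - depth j := hAmin i h j hjleaf hjA
          have h2 : M - depth j = τs := hjfilter.2
          omega
        · rw [mem_filter] at h
          have h2 : M - depth i = τs := h.2
          omega
      exact lt_of_lt_of_le hτsL (Finset.card_le_card hSsub)
    -- monotonicity gives: at every step σ ≤ τs there are > L small leaves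
    have hll : ∀ p j, prec p j → M - depth p ≤ M - depth j := by
      intro p j hpj
      have := hdepth_succ p j hpj
      omega
    have hTσ : ∀ σ ≤ τs, L < ((leavesOf prec (remainingSet S σ)).filter
        fun i => M - depth i ≤ τs).card := by
      have key : ∀ b ≤ τs, ∀ a ≤ b,
          ((leavesOf prec (remainingSet S b)).filter fun i => M - depth i ≤ τs).card ≤
          ((leavesOf prec (remainingSet S a)).filter fun i => M - depth i ≤ τs).card := by
        intro b
        induction b with
        | zero =>
          intro _ a ha
          obtain rfl : a = 0 := Nat.le_zero.mp ha
          exact le_rfl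
        | succ n ih =>
          intro hb a ha
          rcases Nat.lt_or_ge a (n+1) with h' | h'
          · have step := tleaves_mono' (lst := fun i => M - depth i) hsucc hll
              (hSl n (by omega)) τs
            exact le_trans step (ih (by omega) a (by omega))
          · obtain rfl : a = n + 1 := by omega
            exact le_rfl
      intro σ hσ
      exact lt_of_lt_of_le hT (key τs le_rfl σ hσ)
    -- hence before (and at) τs, only jobs with lst ≤ τs are scheduled, and
    -- every such step schedules at least L jobs
    have hC : ∀ σ ≤ τs, ∀ i ∈ S σ, M - depth i ≤ τs := by
      intro σ hσ i hiS
      have hσM : σ < M := lt_of_le_of_lt hσ hτsM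
      obtain ⟨A, hA, hAcard, hAmin, hAS⟩ := hrun σ hσM
      rw [hAS] at hiS
      rcases mem_union.mp hiS with h | h
      · have hAle : A.card ≤ L := by rw [hAcard]; exact min_le_left _ _
        have hb : ∃ b ∈ (leavesOf prec (remainingSet S σ)).filter
            (fun i => M - depth i ≤ τs), b ∉ A := by
          by_contra hc
          push_neg at hc
          have h1 := Finset.card_le_card hc
          have h2 := hTσ σ hσ
          omega
        obtain ⟨b, hb1, hb2⟩ := hb
        rw [mem_filter] at hb1
        have h1 : M - depth i ≤ M - depth b := hAmin i h b hb1.1 hb2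
        have h2 : M - depth b ≤ τs := hb1.2
        omega
      · rw [mem_filter] at h
        have h2 : M - depth i = σ := h.2
        omega
    have hfull : ∀ σ ≤ τs, L ≤ (S σ).card := by
      intro σ hσ
      have hσM : σ < M := lt_of_le_of_lt hσ hτsM
      obtain ⟨A, hA, hAcard, hAmin, hAS⟩ := hrun σ hσM
      have h1 := hTσ σ hσ
      have h2 : ((leavesOf prec (remainingSet S σ)).filter
          fun i => M - depth i ≤ τs).card ≤ (leavesOf prec (remainingSet S σ)).card :=
        Finset.card_filter_le _ _
      have h3 : A ⊆ S σ := hAS ▸ Finset.subset_union_left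
      have h4 := Finset.card_le_card h3
      omega
    -- the sets of late jobs
    have hsetx : (univ.filter fun i => τs < x i) =
        (univ.filter fun i => τs < M - depth i) := by
      ext i
      simp only [mem_filter, mem_univ, true_and]
      constructor
      · intro h
        have := hxlst i
        omega
      · intro h
        by_contra hc
        push_neg at hc
        have := hC (x i) hc i ((hx i (x i)).mp rfl)
        omega
    have hsety : (univ.filter fun i => τs < y i) ⊆
        (univ.filter fun i => τs < M - depth i) := by
      intro i hi
      simp only [mem_filter, mem_univ, true_and] at hi ⊢
      have h1 := hylst i
      omega
    have hcard : (univ.filter fun i => τs < y i).card ≤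
        (univ.filter fun i => τs < x i).card := by
      rw [hsetx]
      exact Finset.card_le_card hsety
    -- counting: late jobs = sum of fibers over (τs, M)
    have hcount : ∀ z : ι → ℕ, (∀ i, z i < M) →
        (univ.filter fun i => τs < z i).card =
        ∑ σ ∈ Finset.Ico (τs+1) M, (univ.filter fun i => z i = σ).card := by
      intro z hz
      rw [Finset.card_eq_sum_card_fiberwise
        (f := z) (t := Finset.Ico (τs+1) M)
        (fun i hi => by
          rw [mem_coe, mem_filter] at hi
          rw [mem_coe, Finset.mem_Ico]
          exact ⟨hi.2, hz i⟩)]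
      apply Finset.sum_congr rfl
      intro σ hσ
      rw [Finset.mem_Ico] at hσ
      congr 1
      ext i
      simp only [mem_filter, mem_univ, true_and]
      constructor
      · exact fun h => h.2
      · exact fun h => ⟨by omega, h⟩
    have hsplit : ∀ g : ℕ → ℕ, ∑ σ ∈ Finset.range M, g σ =
        ∑ σ ∈ Finset.range (τs+1), g σ + ∑ σ ∈ Finset.Ico (τs+1) M, g σ := by
      intro g
      rw [Finset.range_eq_Ico, Finset.range_eq_Ico]
      exact (Finset.sum_Ico_consecutive g (Nat.zero_le (τs+1)) (show τs + 1 ≤ M by omega)).symm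
    calc ∑ τ ∈ Finset.range M, min L ((univ.filter fun i => y i = τ).card)
        = ∑ σ ∈ Finset.range (τs+1), min L ((univ.filter fun i => y i = σ).card)
          + ∑ σ ∈ Finset.Ico (τs+1) M, min L ((univ.filter fun i => y i = σ).card) :=
          hsplit _
      _ ≤ (τs+1) * L + (univ.filter fun i => τs < y i).card := by
          apply Nat.add_le_add
          · calc ∑ σ ∈ Finset.range (τs+1), min L ((univ.filter fun i => y i = σ).card)
                ≤ ∑ _σ ∈ Finset.range (τs+1), L :=
                  Finset.sum_le_sum (fun σ _ => min_le_left _ _)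
              _ = (τs+1) * L := by rw [Finset.sum_const, Finset.card_range, smul_eq_mul]
          · rw [hcount y hyM]
            exact Finset.sum_le_sum (fun σ _ => min_le_right _ _)
      _ ≤ (τs+1) * L + (univ.filter fun i => τs < x i).card := by omega
      _ = ∑ σ ∈ Finset.range (τs+1), min L ((univ.filter fun i => x i = σ).card)
          + ∑ σ ∈ Finset.Ico (τs+1) M, min L ((univ.filter fun i => x i = σ).card) := by
          rw [hcount x hxM]
          congr 1
          · have hterm : ∀ σ ∈ Finset.range (τs+1),
                min L ((univ.filter fun i => x i = σ).card) = L := by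
              intro σ hσ
              rw [mem_range] at hσ
              rw [hfx σ]
              have := hfull σ (by omega)
              omega
            rw [Finset.sum_congr rfl hterm, Finset.sum_const, Finset.card_range,
              smul_eq_mul]
          · apply Finset.sum_congr rfl
            intro σ hσ
            rw [Finset.mem_Ico] at hσ
            rw [hfx σ]
            have := hmax σ (by omega) (by omega)
            omega
      _ = ∑ τ ∈ Finset.range M, min L ((univ.filter fun i => x i = τ).card) :=
          (hsplit _).symm
  · -- no overloaded step: the algorithm schedules everything, F(x) = |ι|
    push_neg at hO
    calc ∑ τ ∈ Finset.range M, min L ((univ.filter fun i => y i = τ).card)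
        ≤ ∑ τ ∈ Finset.range M, (univ.filter fun i => y i = τ).card :=
          Finset.sum_le_sum (fun σ _ => min_le_right _ _)
      _ = (univ : Finset ι).card :=
          (Finset.card_eq_sum_card_fiberwise (fun i _ => mem_range.mpr (hyM i))).symm
      _ = ∑ τ ∈ Finset.range M, (univ.filter fun i => x i = τ).card :=
          Finset.card_eq_sum_card_fiberwise (fun i _ => mem_range.mpr (hxM i))
      _ = ∑ τ ∈ Finset.range M, min L ((univ.filter fun i => x i = τ).card) := by
          apply Finset.sum_congr rfl
          intro σ hσ
          rw [mem_range] at hσ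
          rw [hfx σ]
          have := hO σ hσ
          omega
end

section
/- Let x be the schedule produced by the in-tree leveling list algorithm with level L and deadline M. If more than L jobs are scheduled at some time step τ, then: (i) every job scheduled at τ has latest starting time exactly τ; (ii) for every τ' ≤ τ, at least L jobs are scheduled at τ'; (iii) for every τ' ≤ τ, every job scheduled at τ' has latest starting time at most τ. -/
open Finset

variable {ι : Type*}

/-- Structural properties of a schedule produced by the in-tree leveling list algorithm:
if more than `L` jobs are scheduled at time step `τ`, then (i) every job scheduled at `τ`
has latest starting time exactly `τ`; (ii) at least `L` jobs are scheduled at every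
`τ' ≤ τ`; (iii) every job scheduled at some `τ' ≤ τ` has latest starting time at most `τ`. -/
theorem stmt9 {ι : Type*} [Fintype ι] [DecidableEq ι]
    (prec : ι → ι → Prop) [DecidableRel prec]
    (hsucc : ∀ i j k, prec i j → prec i k → j = k)
    (depth : ι → ℕ)
    (hdepth_leaf : ∀ i, (∀ j, ¬ prec i j) → depth i = 1)
    (hdepth_succ : ∀ i j, prec i j → depth i = depth j + 1)
    (L M : ℕ) (hM : ∀ i, depth i ≤ M)
    (S : ℕ → Finset ι) (hrun : IsAlgRun prec (fun i => M - depth i) L M S)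
    (τ : ℕ) (hτ : τ < M) (hover : L < (S τ).card) :
    (∀ i ∈ S τ, M - depth i = τ) ∧
    (∀ τ' ≤ τ, L ≤ (S τ').card) ∧
    (∀ τ' ≤ τ, ∀ i ∈ S τ', M - depth i ≤ τ) := by
  classical
  set lst : ι → ℕ := fun i => M - depth i with hlst
  have mem_leaves : ∀ (R : Finset ι) (i : ι),
      i ∈ leavesOf prec R ↔ i ∈ R ∧ ∀ j ∈ R, ¬ prec j i := by
    intro R i
    simp [leavesOf]
  -- lst strictly decreases along predecessors
  have hdec : ∀ i j, prec j i → lst j < lst i := by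
    intro i j h
    have h1 : depth j = depth i + 1 := hdepth_succ j i h
    have h2 : depth j ≤ M := hM j
    simp only [hlst]
    omega
  have hRmono : ∀ t, remainingSet S (t + 1) ⊆ remainingSet S t := by
    intro t
    show remainingSet S t \ S t ⊆ remainingSet S t
    exact sdiff_subset
  have hRS : ∀ t, ∀ i ∈ remainingSet S (t + 1), i ∉ S t := by
    intro t i hi
    exact (mem_sdiff.mp hi).2
  -- invariant: every remaining job at time t has lst ≥ t
  have hInv : ∀ t ≤ M, ∀ i ∈ remainingSet S t, t ≤ lst i := by
    intro t
    induction t with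
    | zero => intro _ i _; exact Nat.zero_le _
    | succ t ih =>
      intro hle i hi
      have ht : t < M := by omega
      obtain ⟨A, hA, hcard, hmin, hS⟩ := hrun t ht
      have hi' : i ∈ remainingSet S t := hRmono t hi
      have h1 : t ≤ lst i := ih (by omega) i hi'
      rcases eq_or_lt_of_le h1 with h | h
      · exfalso
        have hmem : i ∈ S t := by
          rw [hS]
          exact mem_union_right _ (mem_filter.mpr ⟨hi', h.symm⟩)
        exact hRS t i hi hmem
      · exact h
  -- every scheduled job is a leaf of the remaining graph
  have hSleaf : ∀ t < M, S t ⊆ leavesOf prec (remainingSet S t) := by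
    intro t ht i hi
    obtain ⟨A, hA, hcard, hmin, hS⟩ := hrun t ht
    rw [hS] at hi
    rcases mem_union.mp hi with h | h
    · exact hA h
    · obtain ⟨hiR, hlsti⟩ := mem_filter.mp h
      refine (mem_leaves _ _).mpr ⟨hiR, ?_⟩
      intro j hj hpj
      have h1 := hInv t (le_of_lt ht) j hj
      have h2 := hdec i j hpj
      omega
  have hSsubR : ∀ t < M, S t ⊆ remainingSet S t := by
    intro t ht i hi
    exact ((mem_leaves _ _).mp (hSleaf t ht hi)).1
  -- the number of remaining leaves with lst ≤ τ
  set g : ℕ → ℕ :=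
    fun t => ((leavesOf prec (remainingSet S t)).filter fun i => lst i ≤ τ).card with hg
  have hgmono : ∀ t < M, g (t + 1) ≤ g t := by
    intro t ht
    apply Finset.card_le_card_of_injOn
      (fun i => if h : ∃ j ∈ S t, prec j i then h.choose else i)
    · intro i hi
      obtain ⟨hileaf, hilst⟩ := mem_filter.mp hi
      obtain ⟨hiR1, hnopred1⟩ := (mem_leaves _ _).mp hileaf
      have hiRt : i ∈ remainingSet S t := hRmono t hiR1
      have hiSt : i ∉ S t := hRS t i hiR1
      by_cases h : ∃ j ∈ S t, prec j i
      · simp only [Finset.mem_coe]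
        rw [dif_pos h]
        obtain ⟨hjS, hpj⟩ := h.choose_spec
        refine mem_filter.mpr ⟨hSleaf t ht hjS, ?_⟩
        have := hdec i h.choose hpj
        omega
      · simp only [Finset.mem_coe]
        rw [dif_neg h]
        refine mem_filter.mpr ⟨(mem_leaves _ _).mpr ⟨hiRt, ?_⟩, hilst⟩
        intro j hj hpj
        by_cases hjn : j ∈ remainingSet S (t + 1)
        · exact hnopred1 j hjn hpj
        · have : j ∈ S t := by
            by_contra hc
            exact hjn (mem_sdiff.mpr ⟨hj, hc⟩)
          exact h ⟨j, this, hpj⟩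
    · intro i1 h1 i2 h2 heq
      have hi1R : i1 ∈ remainingSet S (t + 1) :=
        ((mem_leaves _ _).mp (mem_filter.mp h1).1).1
      have hi2R : i2 ∈ remainingSet S (t + 1) :=
        ((mem_leaves _ _).mp (mem_filter.mp h2).1).1
      simp only at heq
      by_cases e1 : ∃ j ∈ S t, prec j i1 <;> by_cases e2 : ∃ j ∈ S t, prec j i2
      · rw [dif_pos e1, dif_pos e2] at heq
        exact hsucc e1.choose i1 i2 e1.choose_spec.2 (heq ▸ e2.choose_spec.2)
      · rw [dif_pos e1, dif_neg e2] at heq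
        exact absurd (heq ▸ e1.choose_spec.1) (hRS t i2 hi2R)
      · rw [dif_neg e1, dif_pos e2] at heq
        exact absurd (heq ▸ e2.choose_spec.1) (hRS t i1 hi1R)
      · rwa [dif_neg e1, dif_neg e2] at heq
  have hstep : ∀ t k, t + k ≤ M → g (t + k) ≤ g t := by
    intro t k hk
    induction k with
    | zero => exact le_refl _
    | succ k ih =>
      have h1 : t + k < M := by omega
      have h2 : g (t + k + 1) ≤ g (t + k) := hgmono _ h1
      have h3 : g (t + k) ≤ g t := ih (by omega)
      have he : t + (k + 1) = t + k + 1 := by omega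
      rw [he]
      omega
  -- part (i)
  have part1 : ∀ i ∈ S τ, lst i = τ := by
    intro i hi
    obtain ⟨A, hA, hcard, hmin, hS⟩ := hrun τ hτ
    have hiR : i ∈ remainingSet S τ := hSsubR τ hτ hi
    have hge : τ ≤ lst i := hInv τ hτ.le i hiR
    by_contra hne
    have hiA : i ∈ A := by
      rw [hS] at hi
      rcases mem_union.mp hi with h | h
      · exact h
      · exact absurd (mem_filter.mp h).2 hne
    have hAcard : A.card ≤ L := by
      rw [hcard]; exact min_le_left _ _
    have hnsub : ¬ S τ ⊆ A := by
      intro hsub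
      have := card_le_card hsub
      omega
    obtain ⟨b, hbS, hbA⟩ := not_subset.mp hnsub
    have hbF : b ∈ (remainingSet S τ).filter fun i => lst i = τ := by
      rw [hS] at hbS
      rcases mem_union.mp hbS with h | h
      · exact absurd h hbA
      · exact h
    have hbleaf : b ∈ leavesOf prec (remainingSet S τ) := hSleaf τ hτ hbS
    have h1 := hmin i hiA b hbleaf hbA
    have h2 := (mem_filter.mp hbF).2
    omega
  have hgτ : L < g τ := by
    have hsub : S τ ⊆ (leavesOf prec (remainingSet S τ)).filter fun i => lst i ≤ τ := by
      intro i hi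
      exact mem_filter.mpr ⟨hSleaf τ hτ hi, le_of_eq (part1 i hi)⟩
    exact lt_of_lt_of_le hover (card_le_card hsub)
  have hglow : ∀ τ' ≤ τ, L < g τ' := by
    intro τ' h
    have h1 : g (τ' + (τ - τ')) ≤ g τ' := hstep τ' (τ - τ') (by omega)
    have h2 : τ' + (τ - τ') = τ := by omega
    rw [h2] at h1
    omega
  -- part (ii)
  have part2 : ∀ τ' ≤ τ, L ≤ (S τ').card := by
    intro τ' h
    have hM' : τ' < M := lt_of_le_of_lt h hτ
    obtain ⟨A, hA, hcard, hmin, hS⟩ := hrun τ' hM'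
    have h1 : L < g τ' := hglow τ' h
    have h2 : g τ' ≤ (leavesOf prec (remainingSet S τ')).card := card_filter_le _ _
    have h3 : A.card = L := by
      rw [hcard]; omega
    have h4 : A ⊆ S τ' := by
      rw [hS]; exact subset_union_left
    have := card_le_card h4
    omega
  -- part (iii)
  have part3 : ∀ τ' ≤ τ, ∀ i ∈ S τ', lst i ≤ τ := by
    intro τ' h i hi
    have hM' : τ' < M := lt_of_le_of_lt h hτ
    obtain ⟨A, hA, hcard, hmin, hS⟩ := hrun τ' hM'
    rw [hS] at hi
    rcases mem_union.mp hi with hiA | hiF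
    · by_contra hgt
      push_neg at hgt
      have hsub : (leavesOf prec (remainingSet S τ')).filter (fun i => lst i ≤ τ) ⊆ A := by
        intro b hb
        obtain ⟨hbleaf, hblst⟩ := mem_filter.mp hb
        by_contra hbA
        have := hmin i hiA b hbleaf hbA
        omega
      have h1 : g τ' ≤ A.card := card_le_card hsub
      have h2 : A.card ≤ L := by rw [hcard]; exact min_le_left _ _
      have h3 := hglow τ' h
      omega
    · have := (mem_filter.mp hiF).2
      omega
  exact ⟨part1, part2, part3⟩
end

section
/- For the resource leveling problem with level L = 1, precedence constraints, makespan deadline M at least the longest path length, and all resource consumptions strictly positive, the following algorithm yields an optimal schedule: take a topological order i_1,...,i_n, set x_{i_1} = 0, and x_{i_k} = min(Σ_{k' < k} p_{i_{k'}}, τ̄_{i_k}) where τ̄_i is the latest starting time of job i. The schedule is feasible and F(x) = min(Σ_{i∈J} p_i, M). -/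
open Finset

/-- The algorithm for `L1 | prec, C_max ≤ M, c_i > 0 | F`: schedule jobs sequentially
in a topological order, truncated at the latest starting times `M - ℓ i` (where `ℓ i`
is the total processing time of a longest path starting at `i`).  The resulting
schedule `x` is feasible, satisfies `F(x) = min(Σ p_i, M)` and is optimal. -/
theorem stmt10 {ι : Type*} [Fintype ι] [DecidableEq ι]
    (prec : ι → ι → Prop) [DecidableRel prec]
    (p c : ι → ℕ) (hc : ∀ i, 0 < c i) (M : ℕ)
    (ℓ : ι → ℕ)
    (hℓ : ∀ i, ℓ i = p i + (univ.filter fun j => prec i j).sup ℓ)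
    (hM : ∀ i, ℓ i ≤ M)
    (n : ℕ) (e : Fin n ≃ ι)
    (htopo : ∀ k k' : Fin n, prec (e k) (e k') → k < k')
    (x : ι → ℕ)
    (hx : ∀ k : Fin n, x (e k) =
      min (∑ k' ∈ univ.filter (fun k' : Fin n => k' < k), p (e k')) (M - ℓ (e k))) :
    ((∀ i j, prec i j → x i + p i ≤ x j) ∧ (∀ i, x i + p i ≤ M)) ∧
    (∑ τ ∈ Finset.range M,
        min 1 (∑ i ∈ univ.filter (fun i => x i ≤ τ ∧ τ < x i + p i), c i))
      = min (∑ i, p i) M ∧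
    ∀ y : ι → ℕ, (∀ i j, prec i j → y i + p i ≤ y j) → (∀ i, y i + p i ≤ M) →
      (∑ τ ∈ Finset.range M,
          min 1 (∑ i ∈ univ.filter (fun i => y i ≤ τ ∧ τ < y i + p i), c i)) ≤
      (∑ τ ∈ Finset.range M,
          min 1 (∑ i ∈ univ.filter (fun i => x i ≤ τ ∧ τ < x i + p i), c i)) := by
  -- basic facts
  have hℓp : ∀ i, p i ≤ ℓ i := fun i => (hℓ i) ▸ Nat.le_add_right _ _
  have hprecℓ : ∀ i j, prec i j → p i + ℓ j ≤ ℓ i := by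
    intro i j h
    rw [hℓ i]
    exact Nat.add_le_add_left (Finset.le_sup (by simp [h])) _
  have hxM : ∀ i, x i ≤ M - ℓ i := by
    intro i
    have := hx (e.symm i)
    simp only [Equiv.apply_symm_apply] at this
    rw [this]; exact min_le_right _ _
  have hxS : ∀ k : Fin n,
      x (e k) ≤ ∑ k' ∈ univ.filter (fun k' : Fin n => k' < k), p (e k') := by
    intro k; rw [hx k]; exact min_le_left _ _
  -- feasibility
  have hfeas1 : ∀ i j, prec i j → x i + p i ≤ x j := by
    intro i j hij
    obtain ⟨k, rfl⟩ : ∃ k, e k = i := ⟨e.symm i, e.apply_symm_apply i⟩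
    obtain ⟨k', rfl⟩ : ∃ k', e k' = j := ⟨e.symm j, e.apply_symm_apply j⟩
    have hkk' : k < k' := htopo _ _ hij
    have h1 : x (e k) + p (e k) ≤ ∑ m ∈ univ.filter (fun m : Fin n => m < k'), p (e m) := by
      have hsub : insert k (univ.filter (fun m : Fin n => m < k)) ⊆
          univ.filter (fun m : Fin n => m < k') := by
        intro m hm
        simp only [mem_insert, mem_filter, mem_univ, true_and] at hm ⊢
        rcases hm with rfl | hm
        · exact hkk'
        · exact hm.trans hkk'
      have hnm : k ∉ univ.filter (fun m : Fin n => m < k) := by simp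
      calc x (e k) + p (e k)
            ≤ (∑ m ∈ univ.filter (fun m : Fin n => m < k), p (e m)) + p (e k) := by
              have := hxS k
              omega
        _ = ∑ m ∈ insert k (univ.filter (fun m : Fin n => m < k)), p (e m) := by
              rw [Finset.sum_insert hnm]; ring
        _ ≤ _ := Finset.sum_le_sum_of_subset hsub
    have h2 : x (e k) + p (e k) ≤ M - ℓ (e k') := by
      have hxi := hxM (e k)
      have hpl := hprecℓ _ _ hij
      have hMi := hM (e k)
      omega
    rw [hx k']
    exact le_min h1 h2
  have hfeas2 : ∀ i, x i + p i ≤ M := by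
    intro i
    have := hxM i; have := hℓp i; have := hM i; omega
  -- generic upper bound on F for any schedule
  have hub : ∀ y : ι → ℕ,
      (∑ τ ∈ Finset.range M,
          min 1 (∑ i ∈ univ.filter (fun i => y i ≤ τ ∧ τ < y i + p i), c i)) ≤
        min (∑ i, p i) M := by
    intro y
    refine le_min ?_ ?_
    · calc (∑ τ ∈ Finset.range M,
            min 1 (∑ i ∈ univ.filter (fun i => y i ≤ τ ∧ τ < y i + p i), c i))
          ≤ ∑ τ ∈ Finset.range M,
            (univ.filter (fun i => y i ≤ τ ∧ τ < y i + p i)).card := by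
            refine Finset.sum_le_sum fun τ _ => ?_
            rcases (univ.filter (fun i => y i ≤ τ ∧ τ < y i + p i)).eq_empty_or_nonempty
              with h | h
            · rw [h]; simp
            · exact le_trans (min_le_left _ _) (Finset.card_pos.mpr h)
        _ = ∑ τ ∈ Finset.range M, ∑ i : ι, if y i ≤ τ ∧ τ < y i + p i then 1 else 0 := by
            refine Finset.sum_congr rfl fun τ _ => ?_
            rw [Finset.card_filter]
        _ = ∑ i : ι, ∑ τ ∈ Finset.range M, if y i ≤ τ ∧ τ < y i + p i then 1 else 0 :=
            Finset.sum_comm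
        _ ≤ ∑ i, p i := by
            refine Finset.sum_le_sum fun i _ => ?_
            rw [← Finset.card_filter]
            calc ((Finset.range M).filter (fun τ => y i ≤ τ ∧ τ < y i + p i)).card
                ≤ (Finset.Ico (y i) (y i + p i)).card := by
                  refine Finset.card_le_card fun τ hτ => ?_
                  simp only [Finset.mem_filter, Finset.mem_range] at hτ
                  simp only [Finset.mem_Ico]
                  exact hτ.2
              _ = p i := by rw [Nat.card_Ico]; omega
    · calc (∑ τ ∈ Finset.range M,
            min 1 (∑ i ∈ univ.filter (fun i => y i ≤ τ ∧ τ < y i + p i), c i))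
          ≤ ∑ _τ ∈ Finset.range M, 1 :=
            Finset.sum_le_sum fun τ _ => min_le_left _ _
        _ = M := by simp
  -- coverage: every τ < min(Σp, M) has an active job under x
  have hsum : ∑ i, p i = ∑ k : Fin n, p (e k) := (Equiv.sum_comp e p).symm
  have hcover : ∀ τ, τ < ∑ i, p i → τ < M →
      ∃ i : ι, x i ≤ τ ∧ τ < x i + p i := by
    intro τ hτp hτM
    have hn : 0 < n := by
      rcases Nat.eq_zero_or_pos n with h | h
      · subst h
        simp only [Finset.univ_eq_empty, Finset.sum_empty] at hsum
        omega
      · exact h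
    by_contra hno
    push_neg at hno
    set S := univ.filter (fun k : Fin n => x (e k) ≤ τ) with hSdef
    have hS : S.Nonempty := by
      refine ⟨⟨0, hn⟩, ?_⟩
      simp only [hSdef, mem_filter, mem_univ, true_and]
      have h0 : (univ.filter (fun k' : Fin n => k' < ⟨0, hn⟩)) = ∅ := by
        ext m; simp [Fin.lt_def]
      rw [hx, h0]
      simp
    set k := S.max' hS with hkdef
    have hkle : x (e k) ≤ τ := by
      have := S.max'_mem hS
      rw [← hkdef] at this
      simpa [hSdef] using this
    have hkp : τ ≥ x (e k) + p (e k) := by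
      have := hno (e k)
      omega
    rcases le_or_gt (∑ k' ∈ univ.filter (fun k' : Fin n => k' < k), p (e k'))
        (M - ℓ (e k)) with hmin | hmin
    · -- x (e k) = partial sum
      have hxk : x (e k) = ∑ k' ∈ univ.filter (fun k' : Fin n => k' < k), p (e k') := by
        rw [hx]; exact min_eq_left hmin
      have hnm : k ∉ univ.filter (fun m : Fin n => m < k) := by simp
      by_cases hlast : (k : ℕ) + 1 < n
      · set k1 : Fin n := ⟨(k : ℕ) + 1, hlast⟩ with hk1
        have hins : univ.filter (fun m : Fin n => m < k1) =
            insert k (univ.filter (fun m : Fin n => m < k)) := by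
          ext m
          simp only [mem_filter, mem_univ, true_and, mem_insert]
          rw [Fin.lt_def, Fin.lt_def, Fin.ext_iff]
          simp only [hk1]
          omega
        have hxk1 : x (e k1) ≤ τ := by
          rw [hx]
          refine le_trans (min_le_left _ _) ?_
          rw [hins, Finset.sum_insert hnm]
          omega
        have hk1S : k1 ∈ S := by simp [hSdef, hxk1]
        have := S.le_max' k1 hk1S
        rw [← hkdef] at this
        have : (k1 : ℕ) ≤ (k : ℕ) := this
        simp only [hk1] at this
        omega
      · -- k is the last index
        have huniv : (univ : Finset (Fin n)) =
            insert k (univ.filter (fun m : Fin n => m < k)) := by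
          ext m
          simp only [mem_univ, mem_insert, mem_filter, true_and, true_iff]
          have := m.isLt
          rw [Fin.ext_iff, Fin.lt_def]
          omega
        have : ∑ m : Fin n, p (e m) =
            (∑ m ∈ univ.filter (fun m : Fin n => m < k), p (e m)) + p (e k) := by
          conv_lhs => rw [huniv]
          rw [Finset.sum_insert hnm]; ring
        omega
    · -- x (e k) = M - ℓ (e k)
      have hxk : x (e k) = M - ℓ (e k) := by
        rw [hx]; exact min_eq_right hmin.le
      rcases (univ.filter (fun j => prec (e k) j)).eq_empty_or_nonempty with hT | hT
      · have hℓk : ℓ (e k) = p (e k) := by rw [hℓ, hT]; simp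
        have := hM (e k)
        omega
      · obtain ⟨j₀, hj₀mem, hj₀sup⟩ :=
          Finset.exists_mem_eq_sup _ hT ℓ
        have hprec : prec (e k) j₀ := (mem_filter.mp hj₀mem).2
        have hℓk : ℓ (e k) = p (e k) + ℓ j₀ := by rw [hℓ, ← hj₀sup]
        have hxj : x j₀ ≤ M - ℓ j₀ := hxM j₀
        have hMk : ℓ (e k) ≤ M := hM (e k)
        have hxjτ : x j₀ ≤ τ := by omega
        have hj₀S : e.symm j₀ ∈ S := by
          simp [hSdef, hxjτ]
        have hle := S.le_max' _ hj₀S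
        rw [← hkdef] at hle
        have hgt : k < e.symm j₀ := htopo k (e.symm j₀) (by simpa using hprec)
        exact absurd hle (not_le.mpr hgt)
  -- F(x) = min(Σp, M)
  have hlb : min (∑ i, p i) M ≤
      ∑ τ ∈ Finset.range M,
        min 1 (∑ i ∈ univ.filter (fun i => x i ≤ τ ∧ τ < x i + p i), c i) := by
    calc min (∑ i, p i) M
        = ∑ _τ ∈ Finset.range (min (∑ i, p i) M), 1 := by simp
      _ = ∑ τ ∈ Finset.range (min (∑ i, p i) M),
          min 1 (∑ i ∈ univ.filter (fun i => x i ≤ τ ∧ τ < x i + p i), c i) := by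
          refine Finset.sum_congr rfl fun τ hτ => ?_
          rw [Finset.mem_range] at hτ
          obtain ⟨i, hi1, hi2⟩ := hcover τ (lt_of_lt_of_le hτ (min_le_left _ _))
            (lt_of_lt_of_le hτ (min_le_right _ _))
          have hmem : i ∈ univ.filter (fun i => x i ≤ τ ∧ τ < x i + p i) := by
            simp [hi1, hi2]
          have h1 : 1 ≤ ∑ i ∈ univ.filter (fun i => x i ≤ τ ∧ τ < x i + p i), c i :=
            le_trans (hc i) (Finset.single_le_sum (fun _ _ => Nat.zero_le _) hmem)
          omega
      _ ≤ _ := by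
          refine Finset.sum_le_sum_of_subset ?_
          exact Finset.range_subset_range.mpr (min_le_right _ _)
  have hF : (∑ τ ∈ Finset.range M,
      min 1 (∑ i ∈ univ.filter (fun i => x i ≤ τ ∧ τ < x i + p i), c i))
      = min (∑ i, p i) M := le_antisymm (hub x) hlb
  exact ⟨⟨hfeas1, hfeas2⟩, hF, fun y _ _ => by rw [hF]; exact hub y⟩
end

section
/- In the algorithm for L1 | prec, C_{max} ≤ M, c_i > 0 | F, the returned vector x satisfies the precedence constraints: for every arc (i,j) of the precedence DAG, x_i + p_i ≤ x_j. -/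
open Finset

/-- The schedule returned by the algorithm for `L1 | prec, C_max ≤ M, c_i > 0 | F`
satisfies the precedence constraints: `x_i + p_i ≤ x_j` for every arc `(i, j)`. -/
theorem stmt11 {ι : Type*} [Fintype ι] [DecidableEq ι]
    (prec : ι → ι → Prop) [DecidableRel prec]
    (p : ι → ℕ) (M : ℕ)
    (ℓ : ι → ℕ)
    (hℓ : ∀ i, ℓ i = p i + (univ.filter fun j => prec i j).sup ℓ)
    (hM : ∀ i, ℓ i ≤ M)
    (n : ℕ) (e : Fin n ≃ ι)
    (htopo : ∀ k k' : Fin n, prec (e k) (e k') → k < k')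
    (x : ι → ℕ)
    (hx : ∀ k : Fin n, x (e k) =
      min (∑ k' ∈ univ.filter (fun k' : Fin n => k' < k), p (e k')) (M - ℓ (e k))) :
    ∀ i j, prec i j → x i + p i ≤ x j := by
  intro i j hij
  obtain ⟨k, rfl⟩ := e.surjective i
  obtain ⟨k', rfl⟩ := e.surjective j
  have hkk' : k < k' := htopo k k' hij
  -- ℓ j ≤ sup ≤ ℓ i - p i
  have hℓij : p (e k) + ℓ (e k') ≤ ℓ (e k) := by
    rw [hℓ (e k)]
    exact Nat.add_le_add_left (Finset.le_sup (by simp [hij])) _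
  -- sum fact
  have hsum : (∑ k'' ∈ univ.filter (fun k'' : Fin n => k'' < k), p (e k'')) + p (e k)
      ≤ ∑ k'' ∈ univ.filter (fun k'' : Fin n => k'' < k'), p (e k'') := by
    have hins : (∑ k'' ∈ insert k (univ.filter (fun k'' : Fin n => k'' < k)), p (e k''))
        = (∑ k'' ∈ univ.filter (fun k'' : Fin n => k'' < k), p (e k'')) + p (e k) := by
      rw [Finset.sum_insert (by simp)]
      ring
    rw [← hins]
    apply Finset.sum_le_sum_of_subset
    intro a ha
    simp only [Finset.mem_insert, Finset.mem_filter, Finset.mem_univ, true_and] at ha ⊢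
    rcases ha with rfl | h
    · exact hkk'
    · exact h.trans hkk'
  rw [hx k, hx k']
  have h1 := hM (e k)
  have h2 := hM (e k')
  omega
end

section
/- With jobs partitioned into J_1 (consumption 1) and J_2 (consumption 2), level L = 2, deadline M and p_{J_2} < M, any feasible schedule x in which the jobs of J_2 pairwise do not overlap admits a subset J' ⊆ J_1 with F(x) ≤ 2·p_{J_2} + min(Σ_{i∈J'} p_i, M − p_{J_2}) + min(Σ_{i∈J_1∖J'} p_i, M − p_{J_2}). -/
open Finset

variable {ι : Type*}

/-- Jobs with resource consumption 1. -/
def J1set [Fintype ι] (c : ι → ℕ) : Finset ι := univ.filter fun i => c i = 1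

/-- Jobs with resource consumption 2. -/
def J2set [Fintype ι] (c : ι → ℕ) : Finset ι := univ.filter fun i => c i = 2

/-- Total processing time of the consumption-2 jobs. -/
def pJ2 [Fintype ι] (p c : ι → ℕ) : ℕ := ∑ i ∈ J2set c, p i

/-- The leveling objective with level `L = 2`: per time step the total resource
consumption of running jobs, capped at 2. -/
def lev2F [Fintype ι] (p c : ι → ℕ) (M : ℕ) (x : ι → ℕ) : ℕ :=
  ∑ τ ∈ Finset.range M, min 2 (∑ i ∈ univ.filter (fun i => x i ≤ τ ∧ τ < x i + p i), c i)

lemma exists_coloring [DecidableEq ι] (p x : ι → ℕ) (s : Finset ι) :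
    ∃ color : ι → Bool, ∀ τ : ℕ, ∀ i ∈ s, ∀ j ∈ s, i ≠ j →
      (x i ≤ τ ∧ τ < x i + p i) → (x j ≤ τ ∧ τ < x j + p j) →
      (∃ a ∈ s, (x a ≤ τ ∧ τ < x a + p a) ∧ color a = true) ∧
      (∃ b ∈ s, (x b ≤ τ ∧ τ < x b + p b) ∧ color b = false) := by
  induction s using Finset.strongInduction with
  | _ s ih =>
    rcases s.eq_empty_or_nonempty with rfl | hs
    · exact ⟨fun _ => false, by simp⟩
    obtain ⟨i, his, hmax⟩ := s.exists_max_image x hs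
    have hss : s.erase i ⊂ s := Finset.erase_ssubset his
    obtain ⟨color', hcol⟩ := ih _ hss
    set C := (s.erase i).filter (fun j => x j ≤ x i ∧ x i < x j + p j) with hCdef
    have hkey : ∀ τ : ℕ, x i ≤ τ → ∀ k ∈ s.erase i,
        (x k ≤ τ ∧ τ < x k + p k) → k ∈ C := by
      intro τ hτ k hk hrk
      refine Finset.mem_filter.2 ⟨hk, hmax k (Finset.mem_of_mem_erase hk), ?_⟩
      exact lt_of_le_of_lt hτ hrk.2
    by_cases hCne : C.Nonempty
    · obtain ⟨j0, hj0C, hj0max⟩ := C.exists_max_image (fun k => x k + p k) hCne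
      have hj0e : j0 ∈ s.erase i := (Finset.mem_filter.1 hj0C).1
      have hj0run : x j0 ≤ x i ∧ x i < x j0 + p j0 := (Finset.mem_filter.1 hj0C).2
      have hj0ne : j0 ≠ i := Finset.ne_of_mem_erase hj0e
      refine ⟨Function.update color' i (!color' j0), ?_⟩
      intro τ i1 hi1 j1 hj1 hne hr1 hr2
      have hupd : ∀ a ∈ s.erase i, Function.update color' i (!color' j0) a = color' a :=
        fun a ha => Function.update_of_ne (Finset.ne_of_mem_erase ha) _ _
      -- helper for the mixed case: i runs at τ together with some k ∈ s.erase i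
      have mixed : x i ≤ τ ∧ τ < x i + p i → ∀ k ∈ s.erase i,
          (x k ≤ τ ∧ τ < x k + p k) →
          (∃ a ∈ s, (x a ≤ τ ∧ τ < x a + p a) ∧
            Function.update color' i (!color' j0) a = true) ∧
          (∃ b ∈ s, (x b ≤ τ ∧ τ < x b + p b) ∧
            Function.update color' i (!color' j0) b = false) := by
        intro hri k hk hrk
        have hkC : k ∈ C := hkey τ hri.1 k hk hrk
        have hj0runτ : x j0 ≤ τ ∧ τ < x j0 + p j0 :=
          ⟨le_trans hj0run.1 hri.1, lt_of_lt_of_le hrk.2 (hj0max k hkC)⟩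
        rcases Bool.eq_false_or_eq_true (color' j0) with hb | hb
        · refine ⟨⟨j0, Finset.mem_of_mem_erase hj0e, hj0runτ, ?_⟩, ⟨i, his, hri, ?_⟩⟩
          · rw [hupd j0 hj0e, hb]
          · rw [Function.update_self, hb]; rfl
        · refine ⟨⟨i, his, hri, ?_⟩, ⟨j0, Finset.mem_of_mem_erase hj0e, hj0runτ, ?_⟩⟩
          · rw [Function.update_self, hb]; rfl
          · rw [hupd j0 hj0e, hb]
      by_cases h1 : i1 = i
      · have hj1e : j1 ∈ s.erase i := Finset.mem_erase.2 ⟨fun h => hne (h1.trans h.symm), hj1⟩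
        exact mixed (h1 ▸ hr1) j1 hj1e hr2
      by_cases h2 : j1 = i
      · have hi1e : i1 ∈ s.erase i := Finset.mem_erase.2 ⟨fun h => hne (h.trans h2.symm) , hi1⟩
        exact mixed (h2 ▸ hr2) i1 hi1e hr1
      · have hi1e : i1 ∈ s.erase i := Finset.mem_erase.2 ⟨h1, hi1⟩
        have hj1e : j1 ∈ s.erase i := Finset.mem_erase.2 ⟨h2, hj1⟩
        obtain ⟨⟨a, ha, hra, hca⟩, ⟨b, hb, hrb, hcb⟩⟩ :=
          hcol τ i1 hi1e j1 hj1e hne hr1 hr2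
        exact ⟨⟨a, Finset.mem_of_mem_erase ha, hra, by rw [hupd a ha]; exact hca⟩,
          ⟨b, Finset.mem_of_mem_erase hb, hrb, by rw [hupd b hb]; exact hcb⟩⟩
    · refine ⟨color', ?_⟩
      intro τ i1 hi1 j1 hj1 hne hr1 hr2
      by_cases h1 : i1 = i
      · have hj1e : j1 ∈ s.erase i := Finset.mem_erase.2 ⟨fun h => hne (h1.trans h.symm), hj1⟩
        exact absurd (hkey τ (h1 ▸ hr1).1 j1 hj1e hr2) (fun h => hCne ⟨j1, h⟩)
      by_cases h2 : j1 = i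
      · have hi1e : i1 ∈ s.erase i := Finset.mem_erase.2 ⟨fun h => hne (h.trans h2.symm), hi1⟩
        exact absurd (hkey τ (h2 ▸ hr2).1 i1 hi1e hr1) (fun h => hCne ⟨i1, h⟩)
      · have hi1e : i1 ∈ s.erase i := Finset.mem_erase.2 ⟨h1, hi1⟩
        have hj1e : j1 ∈ s.erase i := Finset.mem_erase.2 ⟨h2, hj1⟩
        obtain ⟨⟨a, ha, hra, hca⟩, ⟨b, hb, hrb, hcb⟩⟩ :=
          hcol τ i1 hi1e j1 hj1e hne hr1 hr2
        exact ⟨⟨a, Finset.mem_of_mem_erase ha, hra, hca⟩,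
          ⟨b, Finset.mem_of_mem_erase hb, hrb, hcb⟩⟩

lemma sum_card_runs [DecidableEq ι] (p x : ι → ℕ) (M : ℕ) (t : Finset ι)
    (hx : ∀ i ∈ t, x i + p i ≤ M) :
    ∑ τ ∈ range M, (t.filter (fun i => x i ≤ τ ∧ τ < x i + p i)).card
      = ∑ i ∈ t, p i := by
  have h1 : ∀ τ, (t.filter (fun i => x i ≤ τ ∧ τ < x i + p i)).card
      = ∑ i ∈ t, if x i ≤ τ ∧ τ < x i + p i then 1 else 0 := fun τ => Finset.card_filter _ _
  simp only [h1]
  rw [Finset.sum_comm]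
  refine Finset.sum_congr rfl ?_
  intro i hi
  have : ∑ τ ∈ range M, (if x i ≤ τ ∧ τ < x i + p i then 1 else 0)
      = ((range M).filter (fun τ => x i ≤ τ ∧ τ < x i + p i)).card :=
    (Finset.card_filter _ _).symm
  rw [this]
  have hfe : (range M).filter (fun τ => x i ≤ τ ∧ τ < x i + p i) = Ico (x i) (x i + p i) := by
    ext τ
    simp only [mem_filter, mem_range, mem_Ico]
    have := hx i hi
    omega
  rw [hfe, Nat.card_Ico]
  omega

/-- Upper bound for `L2 | C_max ≤ M | F`: if the consumption-2 jobs pairwise do not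
overlap in a feasible schedule `x`, then some subset `J' ⊆ J₁` satisfies
`F(x) ≤ 2·p_{J₂} + min(Σ_{J'} p, M − p_{J₂}) + min(Σ_{J₁∖J'} p, M − p_{J₂})`. -/
theorem stmt13 {ι : Type*} [Fintype ι] [DecidableEq ι]
    (p c : ι → ℕ) (hc : ∀ i, c i = 1 ∨ c i = 2) (M : ℕ)
    (hpJ2 : pJ2 p c < M)
    (x : ι → ℕ) (hxfeas : ∀ i, x i + p i ≤ M)
    (hnov : ∀ i ∈ J2set c, ∀ j ∈ J2set c, i ≠ j → ∀ τ : ℕ,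
      ¬(x i ≤ τ ∧ τ < x i + p i ∧ x j ≤ τ ∧ τ < x j + p j)) :
    ∃ J' ⊆ J1set c,
      lev2F p c M x ≤ 2 * pJ2 p c + min (∑ i ∈ J', p i) (M - pJ2 p c)
        + min (∑ i ∈ J1set c \ J', p i) (M - pJ2 p c) := by
  classical
  obtain ⟨color, hcol⟩ := exists_coloring p x (J1set c)
  refine ⟨(J1set c).filter (fun i => color i = true), Finset.filter_subset _ _, ?_⟩
  set J' := (J1set c).filter (fun i => color i = true) with hJ'
  set J'' := J1set c \ J' with hJ''
  set P : ℕ → Prop := fun τ => ∃ j ∈ J2set c, x j ≤ τ ∧ τ < x j + p j with hP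
  set f : ℕ → ℕ := fun τ => min 2 (∑ i ∈ univ.filter (fun i => x i ≤ τ ∧ τ < x i + p i), c i)
    with hf
  -- the J2-covered times have total length pJ2
  have hT2 : (range M).filter P = (J2set c).biUnion (fun j => Ico (x j) (x j + p j)) := by
    ext τ
    simp only [hP, mem_filter, mem_range, mem_biUnion, mem_Ico]
    constructor
    · rintro ⟨-, j, hj, h⟩; exact ⟨j, hj, h⟩
    · rintro ⟨j, hj, h1, h2⟩; exact ⟨lt_of_lt_of_le h2 (hxfeas j), j, hj, h1, h2⟩
  have hT2card : ((range M).filter P).card = pJ2 p c := by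
    rw [hT2, Finset.card_biUnion]
    · refine Finset.sum_congr rfl ?_
      intro j _; rw [Nat.card_Ico]; omega
    · intro a ha b hb hab
      rw [Function.onFun, Finset.disjoint_left]
      intro τ hτa hτb
      rw [mem_Ico] at hτa hτb
      exact hnov a ha b hb hab τ ⟨hτa.1, hτa.2, hτb.1, hτb.2⟩
  have hRcard : ((range M).filter (fun τ => ¬ P τ)).card = M - pJ2 p c := by
    have h := Finset.card_filter_add_card_filter_not (s := range M) (p := P)
    rw [card_range, hT2card] at h
    omega
  -- split the objective
  have hsplit : lev2F p c M x
      = (∑ τ ∈ (range M).filter P, f τ) + ∑ τ ∈ (range M).filter (fun τ => ¬ P τ), f τ :=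
    (Finset.sum_filter_add_sum_filter_not _ _ _).symm
  -- bound on the J2-covered part
  have hpart1 : ∑ τ ∈ (range M).filter P, f τ ≤ 2 * pJ2 p c := by
    calc ∑ τ ∈ (range M).filter P, f τ ≤ ∑ τ ∈ (range M).filter P, 2 :=
          Finset.sum_le_sum (fun τ _ => min_le_left _ _)
      _ = 2 * pJ2 p c := by rw [Finset.sum_const, smul_eq_mul, hT2card, mul_comm]
  -- pointwise bound on the uncovered part
  have hpoint : ∀ τ ∈ (range M).filter (fun τ => ¬ P τ),
      f τ ≤ min 1 (J'.filter (fun i => x i ≤ τ ∧ τ < x i + p i)).card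
          + min 1 (J''.filter (fun i => x i ≤ τ ∧ τ < x i + p i)).card := by
    intro τ hτ
    have hnP : ¬ P τ := (Finset.mem_filter.1 hτ).2
    have hone : ∀ i, (x i ≤ τ ∧ τ < x i + p i) → c i = 1 := by
      intro i hi
      rcases hc i with h | h
      · exact h
      · exact absurd ⟨i, Finset.mem_filter.2 ⟨mem_univ i, h⟩, hi⟩ hnP
    have hset : univ.filter (fun i => x i ≤ τ ∧ τ < x i + p i)
        = (J1set c).filter (fun i => x i ≤ τ ∧ τ < x i + p i) := by
      ext i
      simp only [J1set, Finset.filter_filter, Finset.mem_filter, Finset.mem_univ, true_and]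
      exact ⟨fun h => ⟨hone i h, h⟩, fun h => h.2⟩
    have hsum : (∑ i ∈ univ.filter (fun i => x i ≤ τ ∧ τ < x i + p i), c i)
        = ((J1set c).filter (fun i => x i ≤ τ ∧ τ < x i + p i)).card := by
      rw [hset]
      rw [Finset.card_eq_sum_ones]
      refine Finset.sum_congr rfl ?_
      intro i hi
      exact hone i (Finset.mem_filter.1 hi).2
    set N := ((J1set c).filter (fun i => x i ≤ τ ∧ τ < x i + p i)).card with hN
    have hfτ : f τ = min 2 N := by rw [hf]; simp only; rw [hsum]
    rw [hfτ]
    have key2 : 2 ≤ N → 1 ≤ (J'.filter (fun i => x i ≤ τ ∧ τ < x i + p i)).card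
        ∧ 1 ≤ (J''.filter (fun i => x i ≤ τ ∧ τ < x i + p i)).card := by
      intro h2
      obtain ⟨i1, hi1, j1, hj1, hne⟩ := Finset.one_lt_card.1 h2
      have hmi1 := Finset.mem_filter.1 hi1
      have hmj1 := Finset.mem_filter.1 hj1
      obtain ⟨⟨a, haJ, hra, hca⟩, ⟨b, hbJ, hrb, hcb⟩⟩ :=
        hcol τ i1 hmi1.1 j1 hmj1.1 hne hmi1.2 hmj1.2
      constructor
      · exact Finset.card_pos.2
          ⟨a, Finset.mem_filter.2 ⟨Finset.mem_filter.2 ⟨haJ, hca⟩, hra⟩⟩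
      · refine Finset.card_pos.2 ⟨b, Finset.mem_filter.2 ⟨?_, hrb⟩⟩
        refine Finset.mem_sdiff.2 ⟨hbJ, ?_⟩
        intro hbJ'
        have hbt := (Finset.mem_filter.1 hbJ').2
        rw [hcb] at hbt
        exact Bool.false_ne_true hbt
    have key1 : 1 ≤ N → 1 ≤ (J'.filter (fun i => x i ≤ τ ∧ τ < x i + p i)).card
        ∨ 1 ≤ (J''.filter (fun i => x i ≤ τ ∧ τ < x i + p i)).card := by
      intro h1
      obtain ⟨i1, hi1⟩ := Finset.card_pos.1 h1
      have hmi1 := Finset.mem_filter.1 hi1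
      rcases Bool.eq_false_or_eq_true (color i1) with hb | hb
      · exact Or.inl (Finset.card_pos.2
          ⟨i1, Finset.mem_filter.2 ⟨Finset.mem_filter.2 ⟨hmi1.1, hb⟩, hmi1.2⟩⟩)
      · refine Or.inr (Finset.card_pos.2 ⟨i1, Finset.mem_filter.2 ⟨?_, hmi1.2⟩⟩)
        refine Finset.mem_sdiff.2 ⟨hmi1.1, ?_⟩
        intro hbJ'
        have hbt := (Finset.mem_filter.1 hbJ').2
        rw [hb] at hbt
        exact Bool.false_ne_true hbt
    by_cases h2 : 2 ≤ N
    · obtain ⟨ha, hb⟩ := key2 h2; omega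
    · by_cases h1 : 1 ≤ N
      · rcases key1 h1 with h | h <;> omega
      · omega
  -- sum bounds on the uncovered part, for each color class
  have hclass : ∀ t : Finset ι, t ⊆ J1set c →
      ∑ τ ∈ (range M).filter (fun τ => ¬ P τ),
        min 1 (t.filter (fun i => x i ≤ τ ∧ τ < x i + p i)).card
      ≤ min (∑ i ∈ t, p i) (M - pJ2 p c) := by
    intro t _
    refine le_min ?_ ?_
    · calc ∑ τ ∈ (range M).filter (fun τ => ¬ P τ),
            min 1 (t.filter (fun i => x i ≤ τ ∧ τ < x i + p i)).card
          ≤ ∑ τ ∈ (range M).filter (fun τ => ¬ P τ),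
            (t.filter (fun i => x i ≤ τ ∧ τ < x i + p i)).card :=
            Finset.sum_le_sum (fun τ _ => min_le_right _ _)
        _ ≤ ∑ τ ∈ range M, (t.filter (fun i => x i ≤ τ ∧ τ < x i + p i)).card :=
            Finset.sum_le_sum_of_subset (Finset.filter_subset _ _)
        _ = ∑ i ∈ t, p i := sum_card_runs p x M t (fun i _ => hxfeas i)
    · calc ∑ τ ∈ (range M).filter (fun τ => ¬ P τ),
            min 1 (t.filter (fun i => x i ≤ τ ∧ τ < x i + p i)).card
          ≤ ∑ τ ∈ (range M).filter (fun τ => ¬ P τ), 1 :=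
            Finset.sum_le_sum (fun τ _ => min_le_left _ _)
        _ = M - pJ2 p c := by rw [Finset.sum_const, smul_eq_mul, mul_one, hRcard]
  have hpart2 : ∑ τ ∈ (range M).filter (fun τ => ¬ P τ), f τ
      ≤ min (∑ i ∈ J', p i) (M - pJ2 p c) + min (∑ i ∈ J'', p i) (M - pJ2 p c) := by
    calc ∑ τ ∈ (range M).filter (fun τ => ¬ P τ), f τ
        ≤ ∑ τ ∈ (range M).filter (fun τ => ¬ P τ),
            (min 1 (J'.filter (fun i => x i ≤ τ ∧ τ < x i + p i)).card
            + min 1 (J''.filter (fun i => x i ≤ τ ∧ τ < x i + p i)).card) :=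
          Finset.sum_le_sum hpoint
      _ = (∑ τ ∈ (range M).filter (fun τ => ¬ P τ),
            min 1 (J'.filter (fun i => x i ≤ τ ∧ τ < x i + p i)).card)
          + ∑ τ ∈ (range M).filter (fun τ => ¬ P τ),
            min 1 (J''.filter (fun i => x i ≤ τ ∧ τ < x i + p i)).card :=
          Finset.sum_add_distrib
      _ ≤ _ := add_le_add (hclass J' (Finset.filter_subset _ _))
            (hclass J'' (Finset.sdiff_subset))
  rw [hsplit]
  omega
end

section
/- For L2 | C_{max} ≤ M | F without precedence constraints, schedules in which the jobs of resource consumption 2 pairwise do not overlap are dominant: there exists an optimal schedule with this property, provided Σ_{i∈J_2} p_i < M. -/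
open Finset

variable {ι : Type*}

lemma improve_aux [Fintype ι] [DecidableEq ι]
    (p c : ι → ℕ) (hc : ∀ i, c i = 1 ∨ c i = 2) (M : ℕ)
    (hfit : ∀ i, p i ≤ M) (hpJ2 : pJ2 p c < M)
    (y : ι → ℕ) (hy : ∀ i, y i + p i ≤ M) :
    ∃ x : ι → ℕ, (∀ i, x i + p i ≤ M) ∧ lev2F p c M y ≤ lev2F p c M x ∧
      ∀ i ∈ J2set c, ∀ j ∈ J2set c, i ≠ j → ∀ τ : ℕ,
        ¬(x i ≤ τ ∧ τ < x i + p i ∧ x j ≤ τ ∧ τ < x j + p j) := by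
  classical
  set n := (J2set c).card with hn
  set e : Fin n ≃ {i // i ∈ J2set c} := (J2set c).equivFin.symm with he
  set S : ℕ → ℕ := fun k => ∑ m ∈ Finset.range k,
      if h : m < n then p ((e ⟨m, h⟩ : {i // i ∈ J2set c}) : ι) else 0 with hS
  have hSmono : ∀ k l, k ≤ l → S k ≤ S l := by
    intro k l hkl
    exact Finset.sum_le_sum_of_subset (Finset.range_subset_range.mpr hkl)
  have hSsucc : ∀ (i : ι) (hi : i ∈ J2set c),
      S (((J2set c).equivFin ⟨i, hi⟩ : ℕ) + 1)
        = S ((J2set c).equivFin ⟨i, hi⟩ : ℕ) + p i := by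
    intro i hi
    have hlt : ((J2set c).equivFin ⟨i, hi⟩ : ℕ) < n := ((J2set c).equivFin ⟨i, hi⟩).isLt
    have : (⟨((J2set c).equivFin ⟨i, hi⟩ : ℕ), hlt⟩ : Fin n) = (J2set c).equivFin ⟨i, hi⟩ :=
      Fin.eta _ _
    simp only [hS, Finset.sum_range_succ, dif_pos hlt, this]
    simp [he]
  have hSn : S n = pJ2 p c := by
    have h1 : S n = ∑ k : Fin n, p ((e k : {i // i ∈ J2set c}) : ι) := by
      simp only [hS]
      rw [← Fin.sum_univ_eq_sum_range]
      apply Finset.sum_congr rfl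
      intro k _
      rw [dif_pos k.isLt]
    rw [h1, Equiv.sum_comp e (fun s : {i // i ∈ J2set c} => p (s : ι))]
    rw [pJ2, ← Finset.sum_coe_sort (J2set c) p]
  have hcovS : ∀ m τ, τ < S m → ∃ k, k < m ∧ S k ≤ τ ∧ τ < S (k + 1) := by
    intro m
    induction m with
    | zero => intro τ hτ; simp [hS] at hτ
    | succ m ih =>
      intro τ hτ
      by_cases h : τ < S m
      · obtain ⟨k, hk1, hk2, hk3⟩ := ih τ h
        exact ⟨k, Nat.lt_succ_of_lt hk1, hk2, hk3⟩
      · exact ⟨m, Nat.lt_succ_self m, Nat.le_of_not_lt h, hτ⟩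
  set Cov : Finset ℕ := (J2set c).biUnion (fun i => Finset.Ico (y i) (y i + p i)) with hCov
  have hCovsub : Cov ⊆ Finset.range M := by
    intro τ hτ
    rw [hCov, Finset.mem_biUnion] at hτ
    obtain ⟨i, hi, hτi⟩ := hτ
    rw [Finset.mem_Ico] at hτi
    exact Finset.mem_range.mpr (lt_of_lt_of_le hτi.2 (hy i))
  have hCovcard : Cov.card ≤ pJ2 p c := by
    refine (Finset.card_biUnion_le).trans ?_
    rw [pJ2]
    apply Finset.sum_le_sum
    intro i _
    rw [Nat.card_Ico]
    omega
  set U : Finset ℕ := Finset.range M \ Cov with hU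
  have hCov_M : Cov.card ≤ M := by
    have := Finset.card_le_card hCovsub
    simpa using this
  have hUcard : U.card = M - Cov.card := by
    rw [hU, Finset.card_sdiff_of_subset hCovsub, Finset.card_range]
  have hU_M : U.card ≤ M := by omega
  set ecnt : ℕ → ℕ := fun τ => (U.filter fun σ => τ ≤ σ).card with hecnt
  have hecnt_le : ∀ τ, ecnt τ ≤ U.card := fun τ => Finset.card_filter_le _ _
  have hecnt_pos : ∀ τ ∈ U, 1 ≤ ecnt τ := by
    intro τ hτ
    have : τ ∈ U.filter fun σ => τ ≤ σ := Finset.mem_filter.mpr ⟨hτ, le_refl τ⟩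
    exact Finset.card_pos.mpr ⟨τ, this⟩
  have hecnt_anti : ∀ σ τ, σ ≤ τ → ecnt τ ≤ ecnt σ := by
    intro σ τ hστ
    apply Finset.card_le_card
    intro a ha
    rw [Finset.mem_filter] at ha ⊢
    exact ⟨ha.1, le_trans hστ ha.2⟩
  have hecnt_contr : ∀ σ τ, σ ≤ τ → ecnt σ ≤ ecnt τ + (τ - σ) := by
    intro σ τ hστ
    have hsub : (U.filter fun a => σ ≤ a) ⊆ (U.filter fun a => τ ≤ a) ∪ Finset.Ico σ τ := by
      intro a ha
      rw [Finset.mem_filter] at ha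
      rcases le_or_gt τ a with h | h
      · exact Finset.mem_union_left _ (Finset.mem_filter.mpr ⟨ha.1, h⟩)
      · exact Finset.mem_union_right _ (Finset.mem_Ico.mpr ⟨ha.2, h⟩)
    calc ecnt σ ≤ ((U.filter fun a => τ ≤ a) ∪ Finset.Ico σ τ).card := Finset.card_le_card hsub
      _ ≤ ecnt τ + (Finset.Ico σ τ).card := Finset.card_union_le _ _
      _ = ecnt τ + (τ - σ) := by rw [Nat.card_Ico]
  have hecnt_strict : ∀ σ τ, σ ∈ U → σ < τ → ecnt τ < ecnt σ := by
    intro σ τ hσU hστ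
    apply Finset.card_lt_card
    rw [Finset.ssubset_iff_of_subset]
    · exact ⟨σ, Finset.mem_filter.mpr ⟨hσU, le_refl σ⟩,
        fun h => absurd (Finset.mem_filter.mp h).2 (not_le.mpr hστ)⟩
    · intro a ha
      rw [Finset.mem_filter] at ha ⊢
      exact ⟨ha.1, le_trans hστ.le ha.2⟩
  set T : ι → Finset ℕ := fun i => U ∩ Finset.Ico (y i) (y i + p i) with hT
  set x : ι → ℕ := fun i =>
    if h : i ∈ J2set c then S ((J2set c).equivFin ⟨i, h⟩ : ℕ)
    else if hTi : (T i).Nonempty then min (M - ecnt ((T i).min' hTi)) (M - p i) else 0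
    with hx
  have hxJ2 : ∀ (i : ι) (hi : i ∈ J2set c),
      x i = S ((J2set c).equivFin ⟨i, hi⟩ : ℕ) ∧
      x i + p i = S (((J2set c).equivFin ⟨i, hi⟩ : ℕ) + 1) := by
    intro i hi
    constructor
    · rw [hx]; simp [dif_pos hi]
    · rw [hx]; simp only [dif_pos hi]; rw [hSsucc i hi]
  have hxfeas : ∀ i, x i + p i ≤ M := by
    intro i
    by_cases h : i ∈ J2set c
    · rw [(hxJ2 i h).2]
      have h1 : ((J2set c).equivFin ⟨i, h⟩ : ℕ) + 1 ≤ n := ((J2set c).equivFin ⟨i, h⟩).isLt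
      calc S (((J2set c).equivFin ⟨i, h⟩ : ℕ) + 1) ≤ S n := hSmono _ _ h1
        _ = pJ2 p c := hSn
        _ ≤ M := hpJ2.le
    · rw [hx]
      simp only [dif_neg h]
      by_cases hTi : (T i).Nonempty
      · rw [dif_pos hTi]
        have := min_le_right (M - ecnt ((T i).min' hTi)) (M - p i)
        have := hfit i
        omega
      · rw [dif_neg hTi]
        simpa using hfit i
  -- non-overlap of J2 jobs
  have hnov : ∀ i ∈ J2set c, ∀ j ∈ J2set c, i ≠ j → ∀ τ : ℕ,
      ¬(x i ≤ τ ∧ τ < x i + p i ∧ x j ≤ τ ∧ τ < x j + p j) := by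
    have key : ∀ (i : ι) (hi : i ∈ J2set c) (j : ι) (hj : j ∈ J2set c),
        ((J2set c).equivFin ⟨i, hi⟩ : ℕ) < ((J2set c).equivFin ⟨j, hj⟩ : ℕ) →
        ∀ τ : ℕ, ¬(x i ≤ τ ∧ τ < x i + p i ∧ x j ≤ τ ∧ τ < x j + p j) := by
      intro i hi j hj hlt τ hτ
      have h1 := (hxJ2 i hi).2
      have h2 := (hxJ2 j hj).1
      have h3 : S (((J2set c).equivFin ⟨i, hi⟩ : ℕ) + 1)
          ≤ S ((J2set c).equivFin ⟨j, hj⟩ : ℕ) := hSmono _ _ hlt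
      omega
    intro i hi j hj hij τ
    have hne : ((J2set c).equivFin ⟨i, hi⟩ : ℕ) ≠ ((J2set c).equivFin ⟨j, hj⟩ : ℕ) := by
      intro h
      apply hij
      have : (J2set c).equivFin ⟨i, hi⟩ = (J2set c).equivFin ⟨j, hj⟩ := Fin.ext h
      have := (J2set c).equivFin.injective this
      exact congrArg Subtype.val this
    rcases lt_or_gt_of_ne hne with h | h
    · exact key i hi j hj h τ
    · intro hτ
      exact key j hj i hi h τ ⟨hτ.2.2.1, hτ.2.2.2, hτ.1, hτ.2.1⟩
  -- running jobs at τ ∈ U embed into running jobs at M - ecnt τ under x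
  have hrun_sub : ∀ τ ∈ U, ∀ i : ι, y i ≤ τ ∧ τ < y i + p i →
      x i ≤ M - ecnt τ ∧ M - ecnt τ < x i + p i := by
    intro τ hτU i hrun
    have hτnC : τ ∉ Cov := (Finset.mem_sdiff.mp hτU).2
    have hiJ1 : i ∉ J2set c := by
      intro hi
      exact hτnC (Finset.mem_biUnion.mpr ⟨i, hi, Finset.mem_Ico.mpr hrun⟩)
    have hTi : (T i).Nonempty :=
      ⟨τ, Finset.mem_inter.mpr ⟨hτU, Finset.mem_Ico.mpr hrun⟩⟩
    set τ0 := (T i).min' hTi with hτ0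
    have hτ0T : τ0 ∈ T i := (T i).min'_mem hTi
    have hτ0le : τ0 ≤ τ := (T i).min'_le τ (Finset.mem_inter.mpr ⟨hτU, Finset.mem_Ico.mpr hrun⟩)
    have hτ0U : τ0 ∈ U := (Finset.mem_inter.mp hτ0T).1
    have hτ0I : y i ≤ τ0 ∧ τ0 < y i + p i :=
      Finset.mem_Ico.mp (Finset.mem_inter.mp hτ0T).2
    have hxi : x i = min (M - ecnt τ0) (M - p i) := by
      rw [hx]; simp only [dif_neg hiJ1, dif_pos hTi]; rfl
    have f1 : ecnt τ ≤ ecnt τ0 := hecnt_anti τ0 τ hτ0le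
    have f2 : ecnt τ0 ≤ ecnt τ + (τ - τ0) := hecnt_contr τ0 τ hτ0le
    have f3 : 1 ≤ ecnt τ := hecnt_pos τ hτU
    have f4 : ecnt τ0 ≤ U.card := hecnt_le τ0
    have f5 : p i ≤ M := hfit i
    rw [hxi]
    rcases le_total (M - ecnt τ0) (M - p i) with h | h
    · rw [min_eq_left h]; omega
    · rw [min_eq_right h]; omega
  -- injectivity of the rank map on U
  have hinj : ∀ σ ∈ U, ∀ τ ∈ U, M - ecnt σ = M - ecnt τ → σ = τ := by
    intro σ hσ τ hτ hh
    rcases lt_trichotomy σ τ with h | h | h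
    · have := hecnt_strict σ τ hσ h
      have := hecnt_le σ
      omega
    · exact h
    · have := hecnt_strict τ σ hτ h
      have := hecnt_le τ
      omega
  set img : Finset ℕ := U.image (fun τ => M - ecnt τ) with himgdef
  have himg : img = Finset.Ico (M - U.card) M := by
    apply Finset.eq_of_subset_of_card_le
    · intro σ hσ
      rw [himgdef, Finset.mem_image] at hσ
      obtain ⟨τ, hτ, rfl⟩ := hσ
      have := hecnt_pos τ hτ
      have := hecnt_le τ
      rw [Finset.mem_Ico]
      omega
    · rw [Nat.card_Ico, himgdef, Finset.card_image_of_injOn (fun a ha b hb h =>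
        hinj a (by simpa using ha) b (by simpa using hb) h)]
      omega
  have himgsub : img ⊆ Finset.range M := by
    rw [himg]
    intro σ hσ
    rw [Finset.mem_Ico] at hσ
    exact Finset.mem_range.mpr hσ.2
  have hsdiff : Finset.range M \ img = Finset.range (Cov.card) := by
    rw [himg]
    ext τ
    simp only [Finset.mem_sdiff, Finset.mem_range, Finset.mem_Ico]
    omega
  -- low region is fully covered by J2 jobs in x
  have hlow : ∀ τ ∈ Finset.range (Cov.card),
      min 2 (∑ i ∈ univ.filter (fun i => x i ≤ τ ∧ τ < x i + p i), c i) = 2 := by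
    intro τ hτ
    rw [Finset.mem_range] at hτ
    have hτS : τ < S n := by rw [hSn]; omega
    obtain ⟨k, hkn, hk1, hk2⟩ := hcovS n τ hτS
    set s : {i // i ∈ J2set c} := e ⟨k, hkn⟩ with hs
    have hse : (J2set c).equivFin s = ⟨k, hkn⟩ := by
      rw [hs, he]; exact (J2set c).equivFin.apply_symm_apply ⟨k, hkn⟩
    have hxs : x (s : ι) = S k ∧ x (s : ι) + p (s : ι) = S (k + 1) := by
      have h1 := hxJ2 (s : ι) s.2
      have h2 : ((J2set c).equivFin ⟨(s : ι), s.2⟩ : ℕ) = k := by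
        have : (⟨(s : ι), s.2⟩ : {i // i ∈ J2set c}) = s := rfl
        rw [this, hse]
      rw [h2] at h1
      exact h1
    have hmem : (s : ι) ∈ univ.filter (fun i => x i ≤ τ ∧ τ < x i + p i) := by
      rw [Finset.mem_filter]
      exact ⟨Finset.mem_univ _, by omega, by omega⟩
    have hcs : c (s : ι) = 2 := by
      have := s.2
      simp only [J2set, Finset.mem_filter] at this
      exact this.2
    have h2le : 2 ≤ ∑ i ∈ univ.filter (fun i => x i ≤ τ ∧ τ < x i + p i), c i := by
      calc 2 = c (s : ι) := hcs.symm
        _ ≤ _ := Finset.single_le_sum (fun a _ => Nat.zero_le (c a)) hmem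
    exact min_eq_left h2le
  -- the main chain of inequalities
  refine ⟨x, hxfeas, ?_, hnov⟩
  have e1 : lev2F p c M y
      = ∑ τ ∈ U, min 2 (∑ i ∈ univ.filter (fun i => y i ≤ τ ∧ τ < y i + p i), c i)
      + ∑ τ ∈ Cov, min 2 (∑ i ∈ univ.filter (fun i => y i ≤ τ ∧ τ < y i + p i), c i) := by
    rw [lev2F, ← Finset.sum_sdiff hCovsub]
  have e2 : ∑ τ ∈ Cov, min 2 (∑ i ∈ univ.filter (fun i => y i ≤ τ ∧ τ < y i + p i), c i)
      ≤ 2 * Cov.card := by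
    calc _ ≤ ∑ _τ ∈ Cov, 2 := Finset.sum_le_sum (fun τ _ => min_le_left _ _)
      _ = 2 * Cov.card := by rw [Finset.sum_const, smul_eq_mul, mul_comm]
  have e3 : ∑ τ ∈ U, min 2 (∑ i ∈ univ.filter (fun i => y i ≤ τ ∧ τ < y i + p i), c i)
      ≤ ∑ τ ∈ U, min 2 (∑ i ∈ univ.filter
          (fun i => x i ≤ M - ecnt τ ∧ M - ecnt τ < x i + p i), c i) := by
    apply Finset.sum_le_sum
    intro τ hτ
    apply min_le_min_left
    apply Finset.sum_le_sum_of_subset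
    intro i hi
    rw [Finset.mem_filter] at hi ⊢
    exact ⟨Finset.mem_univ _, hrun_sub τ hτ i hi.2⟩
  have e4 : ∑ τ ∈ U, min 2 (∑ i ∈ univ.filter
          (fun i => x i ≤ M - ecnt τ ∧ M - ecnt τ < x i + p i), c i)
      = ∑ σ ∈ img, min 2 (∑ i ∈ univ.filter (fun i => x i ≤ σ ∧ σ < x i + p i), c i) := by
    rw [himgdef, Finset.sum_image hinj]
  have e5 : lev2F p c M x
      = ∑ τ ∈ Finset.range (Cov.card),
          min 2 (∑ i ∈ univ.filter (fun i => x i ≤ τ ∧ τ < x i + p i), c i)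
      + ∑ σ ∈ img, min 2 (∑ i ∈ univ.filter (fun i => x i ≤ σ ∧ σ < x i + p i), c i) := by
    rw [lev2F, ← Finset.sum_sdiff himgsub, hsdiff]
  have e6 : ∑ τ ∈ Finset.range (Cov.card),
      min 2 (∑ i ∈ univ.filter (fun i => x i ≤ τ ∧ τ < x i + p i), c i) = 2 * Cov.card := by
    rw [Finset.sum_congr rfl hlow, Finset.sum_const, Finset.card_range, smul_eq_mul, mul_comm]
  omega

/-- Dominance for `L2 | C_max ≤ M | F`: there exists an optimal schedule in which
the consumption-2 jobs pairwise do not overlap. -/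
theorem stmt15 {ι : Type*} [Fintype ι] [DecidableEq ι]
    (p c : ι → ℕ) (hc : ∀ i, c i = 1 ∨ c i = 2) (M : ℕ)
    (hfit : ∀ i, p i ≤ M)
    (hpJ2 : pJ2 p c < M) :
    ∃ x : ι → ℕ, (∀ i, x i + p i ≤ M) ∧
      (∀ y : ι → ℕ, (∀ i, y i + p i ≤ M) → lev2F p c M y ≤ lev2F p c M x) ∧
      ∀ i ∈ J2set c, ∀ j ∈ J2set c, i ≠ j → ∀ τ : ℕ,
        ¬(x i ≤ τ ∧ τ < x i + p i ∧ x j ≤ τ ∧ τ < x j + p j) := by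
  classical
  have hbound : ∀ z : ι → ℕ, lev2F p c M z ≤ 2 * M := by
    intro z
    calc lev2F p c M z ≤ ∑ _τ ∈ Finset.range M, 2 :=
          Finset.sum_le_sum (fun τ _ => min_le_left _ _)
      _ = 2 * M := by rw [Finset.sum_const, Finset.card_range, smul_eq_mul, mul_comm]
  set Q : ℕ → Prop := fun v => ∃ y : ι → ℕ, (∀ i, y i + p i ≤ M) ∧ lev2F p c M y = v with hQ
  have hfeas0 : ∀ i, (fun _ : ι => 0) i + p i ≤ M := fun i => by simpa using hfit i
  have hQ0 : Q (lev2F p c M (fun _ => 0)) := ⟨fun _ => 0, hfeas0, rfl⟩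
  have hbest : Q (Nat.findGreatest Q (2 * M)) :=
    Nat.findGreatest_spec (hbound _) hQ0
  obtain ⟨y, hyfeas, hyval⟩ := hbest
  have hymax : ∀ z : ι → ℕ, (∀ i, z i + p i ≤ M) → lev2F p c M z ≤ lev2F p c M y := by
    intro z hz
    rw [hyval]
    exact Nat.le_findGreatest (hbound z) ⟨z, hz, rfl⟩
  obtain ⟨x, hxfeas, hxy, hnov⟩ := improve_aux p c hc M hfit hpJ2 y hyfeas
  exact ⟨x, hxfeas, fun z hz => le_trans (hymax z hz) hxy, hnov⟩
end

section
/- Let I' be an instance of the k-machine scheduling problem Pk | β | C_{max} and I'' the corresponding instance of Lk | β, C_{max} ≤ M, c_i = 1 | F. Then I' has a feasible k-machine schedule of makespan at most M if and only if I'' has a feasible schedule x with F(x) = Σ_{i∈J} p_i. -/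
open Finset

/-- Reduction between `Pk | β | C_max` and `Lk | β, C_max ≤ M, c_i = 1 | F`:
the former has a feasible `k`-machine schedule of makespan at most `M` iff the latter
has a feasible schedule `x` with `F(x) = Σ_i p_i`.  The (arbitrary) constraints `β`
are abstracted as a predicate `C` on schedules. -/
theorem stmt16 {ι : Type*} [Fintype ι] [DecidableEq ι]
    (k : ℕ) (hk : 0 < k) (M : ℕ) (p : ι → ℕ)
    (C : (ι → ℕ) → Prop) :
    (∃ (x : ι → ℕ) (g : ι → Fin k), C x ∧ (∀ i, x i + p i ≤ M) ∧
      ∀ i j, i ≠ j → g i = g j → ∀ τ : ℕ,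
        ¬(x i ≤ τ ∧ τ < x i + p i ∧ x j ≤ τ ∧ τ < x j + p j)) ↔
    (∃ x : ι → ℕ, C x ∧ (∀ i, x i + p i ≤ M) ∧
      (∑ τ ∈ Finset.range M,
        min k ((univ.filter fun i => x i ≤ τ ∧ τ < x i + p i).card)) = ∑ i, p i) := by
  classical
  -- double counting: total work equals sum of running counts
  have key : ∀ x : ι → ℕ, (∀ i, x i + p i ≤ M) →
      (∑ τ ∈ Finset.range M, ((univ.filter fun i => x i ≤ τ ∧ τ < x i + p i).card))
        = ∑ i, p i := by
    intro x hx
    calc ∑ τ ∈ Finset.range M, ((univ.filter fun i : ι => x i ≤ τ ∧ τ < x i + p i).card)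
        = ∑ τ ∈ Finset.range M, ∑ i : ι, if x i ≤ τ ∧ τ < x i + p i then 1 else 0 :=
          Finset.sum_congr rfl fun τ _ => by rw [Finset.card_filter]
      _ = ∑ i : ι, ∑ τ ∈ Finset.range M, if x i ≤ τ ∧ τ < x i + p i then 1 else 0 :=
          Finset.sum_comm
      _ = ∑ i, p i := by
          refine Finset.sum_congr rfl fun i _ => ?_
          rw [← Finset.card_filter]
          have h2 : (Finset.range M).filter (fun τ => x i ≤ τ ∧ τ < x i + p i)
              = Finset.Ico (x i) (x i + p i) := by
            ext τ
            simp only [Finset.mem_filter, Finset.mem_range, Finset.mem_Ico]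
            have := hx i
            omega
          rw [h2, Nat.card_Ico]
          omega
  constructor
  · rintro ⟨x, g, hC, hM, hg⟩
    refine ⟨x, hC, hM, ?_⟩
    rw [← key x hM]
    refine Finset.sum_congr rfl fun τ _ => min_eq_right ?_
    have hinj : Set.InjOn g ((univ.filter fun i : ι => x i ≤ τ ∧ τ < x i + p i) : Finset ι) := by
      intro a ha b hb hab
      by_contra hne
      simp only [Finset.coe_filter, Set.mem_setOf_eq] at ha hb
      exact hg a b hne hab τ ⟨ha.2.1, ha.2.2, hb.2.1, hb.2.2⟩
    calc ((univ.filter fun i : ι => x i ≤ τ ∧ τ < x i + p i).card)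
        ≤ (univ : Finset (Fin k)).card :=
          Finset.card_le_card_of_injOn g (fun a _ => Finset.mem_univ (g a)) hinj
      _ = k := by simp
  · rintro ⟨x, hC, hM, hF⟩
    -- at each time step at most k jobs run
    have hle : ∀ τ ∈ Finset.range M,
        ((univ.filter fun i : ι => x i ≤ τ ∧ τ < x i + p i).card) ≤ k := by
      have htot := key x hM
      have heq : ∀ τ ∈ Finset.range M,
          min k ((univ.filter fun i : ι => x i ≤ τ ∧ τ < x i + p i).card)
            = ((univ.filter fun i : ι => x i ≤ τ ∧ τ < x i + p i).card) := by
        refine (Finset.sum_eq_sum_iff_of_le ?_).mp ?_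
        · intro τ _; exact min_le_right _ _
        · rw [hF, htot]
      intro τ hτ
      rw [← heq τ hτ]
      exact min_le_left _ _
    -- greedy coloring by decreasing start time
    set N := Fintype.card ι with hN
    let e := Fintype.equivFin ι
    let n : ι → ℕ := fun i => x i * N + (e i : ℕ)
    have hcol : ∀ m, ∀ s : Finset ι, s.card = m →
        ∃ g : ι → Fin k, ∀ i ∈ s, ∀ j ∈ s, i ≠ j → g i = g j → ∀ τ : ℕ,
          ¬(x i ≤ τ ∧ τ < x i + p i ∧ x j ≤ τ ∧ τ < x j + p j) := by
      intro m
      induction m with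
      | zero =>
        intro s hs
        refine ⟨fun _ => ⟨0, hk⟩, ?_⟩
        intro i hi
        simp [Finset.card_eq_zero.mp hs] at hi
      | succ m ih =>
        intro s hs
        have hne : s.Nonempty := by rw [← Finset.card_pos, hs]; omega
        obtain ⟨i, hi, hmax⟩ := Finset.exists_max_image s n hne
        obtain ⟨g, hg⟩ := ih (s.erase i) (by rw [Finset.card_erase_of_mem hi, hs]; rfl)
        have hxle : ∀ j ∈ s, x j ≤ x i := by
          intro j hj
          have h3 : n j ≤ n i := hmax j hj
          have h2 : (e i : ℕ) < N := (e i).isLt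
          have h4 : x j * N ≤ x i * N + (e i : ℕ) := le_trans (Nat.le_add_right _ _) h3
          have h5 : x j * N < (x i + 1) * N := by
            rw [add_mul, one_mul]; omega
          exact Nat.lt_succ_iff.mp (Nat.lt_of_mul_lt_mul_right h5)
        set T := (s.erase i).filter
          (fun j => ∃ τ : ℕ, x i ≤ τ ∧ τ < x i + p i ∧ x j ≤ τ ∧ τ < x j + p j) with hT
        have hTcard : T.card < k := by
          rcases T.eq_empty_or_nonempty with h | ⟨j0, hj0⟩
          · simp [h, hk]
          · have hj0' := Finset.mem_filter.mp hj0
            obtain ⟨τ0, hτ0⟩ := hj0'.2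
            have hiM : x i ∈ Finset.range M := by
              have := hM i; simp only [Finset.mem_range]; omega
            have hsub : insert i T ⊆ univ.filter (fun j => x j ≤ x i ∧ x i < x j + p j) := by
              intro a ha
              rcases Finset.mem_insert.mp ha with rfl | haT
              · simp only [Finset.mem_filter, Finset.mem_univ, true_and]
                omega
              · have h1 := Finset.mem_filter.mp haT
                obtain ⟨τ1, hτ1⟩ := h1.2
                have h2 : x a ≤ x i := hxle a (Finset.mem_of_mem_erase h1.1)
                simp only [Finset.mem_filter, Finset.mem_univ, true_and]
                omega
            have hiT : i ∉ T := fun h => (Finset.notMem_erase i s) (Finset.mem_filter.mp h).1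
            have hc1 := Finset.card_le_card hsub
            rw [Finset.card_insert_of_notMem hiT] at hc1
            have hc2 := hle (x i) hiM
            omega
        have himg : (T.image g).card < k := lt_of_le_of_lt Finset.card_image_le hTcard
        have hfree : ∃ c : Fin k, c ∉ T.image g := by
          by_contra h
          push_neg at h
          have hsub : (univ : Finset (Fin k)) ⊆ T.image g := fun c _ => h c
          have := Finset.card_le_card hsub
          simp only [Finset.card_univ, Fintype.card_fin] at this
          omega
        obtain ⟨c, hc⟩ := hfree
        refine ⟨Function.update g i c, ?_⟩
        intro a ha b hb hab hgab τ hτ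
        by_cases hai : a = i
        · have hbi : b ≠ i := fun h => hab (hai.trans h.symm)
          rw [hai] at hτ
          rw [hai, Function.update_self, Function.update_of_ne hbi] at hgab
          apply hc
          rw [hgab]
          exact Finset.mem_image_of_mem g (Finset.mem_filter.mpr
            ⟨Finset.mem_erase.mpr ⟨hbi, hb⟩, ⟨τ, hτ.1, hτ.2.1, hτ.2.2⟩⟩)
        · by_cases hbi : b = i
          · rw [hbi] at hτ
            rw [hbi, Function.update_self, Function.update_of_ne hai] at hgab
            apply hc
            rw [← hgab]
            exact Finset.mem_image_of_mem g (Finset.mem_filter.mpr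
              ⟨Finset.mem_erase.mpr ⟨hai, ha⟩, ⟨τ, hτ.2.2.1, hτ.2.2.2, hτ.1, hτ.2.1⟩⟩)
          · rw [Function.update_of_ne hai, Function.update_of_ne hbi] at hgab
            exact hg a (Finset.mem_erase.mpr ⟨hai, ha⟩) b (Finset.mem_erase.mpr ⟨hbi, hb⟩)
              hab hgab τ hτ
    obtain ⟨g, hg⟩ := hcol (univ : Finset ι).card univ rfl
    exact ⟨x, g, hC, hM, fun i j hij hgij τ =>
      hg i (Finset.mem_univ i) j (Finset.mem_univ j) hij hgij τ⟩
end

section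
/- If x is a schedule of jobs with processing times p_i such that at every instant at most k jobs run simultaneously, then the greedy procedure that processes jobs in nondecreasing order of start time and assigns each job to a machine whose last assigned job finishes earliest produces a partition of J into k sets of pairwise non-overlapping jobs consistent with x. -/
open Finset

theorem stmt17_key {ι : Type*} [Fintype ι] [DecidableEq ι]
    (k n : ℕ) (x p : ι → ℕ) (e : Fin n ≃ ι)
    (hsim : ∀ τ : ℕ, (univ.filter fun i => x i ≤ τ ∧ τ < x i + p i).card ≤ k)
    (hsorted : ∀ s t : Fin n, s ≤ t → x (e s) ≤ x (e t))
    (g : Fin n → Fin k)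
    (hgreedy : ∀ t : Fin n, ∀ m : Fin k,
      (univ.filter fun s : Fin n => s < t ∧ g s = g t).sup (fun s => x (e s) + p (e s)) ≤
      (univ.filter fun s : Fin n => s < t ∧ g s = m).sup (fun s => x (e s) + p (e s)))
    (t : Fin n) (hp : 0 < p (e t)) :
    (univ.filter fun s : Fin n => s < t ∧ g s = g t).sup (fun s => x (e s) + p (e s)) ≤
      x (e t) := by
  by_contra h
  push_neg at h
  have hm : ∀ m : Fin k, x (e t) <
      (univ.filter fun s : Fin n => s < t ∧ g s = m).sup (fun s => x (e s) + p (e s)) :=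
    fun m => lt_of_lt_of_le h (hgreedy t m)
  have hex : ∀ m : Fin k, ∃ s : Fin n, (s < t ∧ g s = m) ∧ x (e t) < x (e s) + p (e s) := by
    intro m
    obtain ⟨s, hs, hlt⟩ := Finset.lt_sup_iff.mp (hm m)
    exact ⟨s, (mem_filter.mp hs).2, hlt⟩
  choose F hF1 hF2 using hex
  set τ := x (e t) with hτ
  set S : Finset ι := insert (e t) (univ.image fun m => e (F m)) with hS
  have hsub : S ⊆ univ.filter fun i => x i ≤ τ ∧ τ < x i + p i := by
    intro i hi
    rw [hS, mem_insert] at hi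
    rcases hi with rfl | hi
    · exact mem_filter.mpr ⟨mem_univ _, le_refl _, by omega⟩
    · obtain ⟨m, _, rfl⟩ := mem_image.mp hi
      refine mem_filter.mpr ⟨mem_univ _, hsorted _ _ (le_of_lt (hF1 m).1), hF2 m⟩
  have hinj : Function.Injective fun m => e (F m) := by
    intro a b hab
    have : F a = F b := e.injective hab
    rw [← (hF1 a).2, ← (hF1 b).2, this]
  have hnot : e t ∉ univ.image fun m => e (F m) := by
    intro hmem
    obtain ⟨m, _, hm'⟩ := mem_image.mp hmem
    exact (ne_of_lt (hF1 m).1) (e.injective hm')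
  have hcard : S.card = k + 1 := by
    rw [hS, card_insert_of_notMem hnot, card_image_of_injective _ hinj, card_univ,
      Fintype.card_fin]
  have := le_trans (le_of_eq hcard.symm) (le_trans (card_le_card hsub) (hsim τ))
  omega

/-- If at most `k` jobs ever run simultaneously in a schedule `x`, then any greedy
assignment -- processing jobs in nondecreasing order of start time and putting each
job on a machine whose last assigned job finishes earliest -- yields a partition into
`k` machines with pairwise non-overlapping jobs on each machine. -/
theorem stmt17 {ι : Type*} [Fintype ι] [DecidableEq ι]
    (k n : ℕ) (x p : ι → ℕ) (e : Fin n ≃ ι)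
    (hsim : ∀ τ : ℕ, (univ.filter fun i => x i ≤ τ ∧ τ < x i + p i).card ≤ k)
    (hsorted : ∀ s t : Fin n, s ≤ t → x (e s) ≤ x (e t))
    (g : Fin n → Fin k)
    (hgreedy : ∀ t : Fin n, ∀ m : Fin k,
      (univ.filter fun s : Fin n => s < t ∧ g s = g t).sup (fun s => x (e s) + p (e s)) ≤
      (univ.filter fun s : Fin n => s < t ∧ g s = m).sup (fun s => x (e s) + p (e s))) :
    ∀ s t : Fin n, s ≠ t → g s = g t → ∀ τ : ℕ,
      ¬(x (e s) ≤ τ ∧ τ < x (e s) + p (e s) ∧ x (e t) ≤ τ ∧ τ < x (e t) + p (e t)) := by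
  have key : ∀ s t : Fin n, s < t → g s = g t → 0 < p (e t) →
      x (e s) + p (e s) ≤ x (e t) := by
    intro s t hst hg hp
    refine le_trans (Finset.le_sup (f := fun s => x (e s) + p (e s)) ?_)
      (stmt17_key k n x p e hsim hsorted g hgreedy t hp)
    exact mem_filter.mpr ⟨mem_univ _, hst, hg⟩
  intro s t hne hg τ ⟨h1, h2, h3, h4⟩
  rcases lt_or_gt_of_ne hne with h | h
  · have := key s t h hg (by omega)
    omega
  · have := key t s h hg.symm (by omega)
    omega
end
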